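/- arXiv:2510.21644 — 7 statements merged into one kernel-verified Lean document; each statement's English description precedes it below -/
import Mathlib

section
/- Let K be a field and O a subring of K in which 2 is a unit. Let 1 ≤ m ≤ n and let a₁,…,aₘ,d ∈ Kˣ satisfy aⱼ·aⱼ₊₁⁻¹ ∈ O for 1 ≤ j ≤ m−1, aₘ² ∈ O, aₘ·d⁻¹ ∈ O, and d² ∈ O. Set T = diag(a₁,…,aₘ,a₁⁻¹,…,aₘ⁻¹) ∈ GL₂ₘ(K) and A = diag(a₁,…,aₘ,d,…,d) ∈ GLₙ(K). Then the following two subsets of the 2m×n matrices over K are equal: (i) U⁻_{H,O} · T⁻¹ · 𝒱 · Bₙ(O), and (ii) the set of X with Xᵀ·J₂ₘ·X ∈ Mₙ(O) intersected with U⁻_{H,O} · 𝒱 · A⁻¹ · Bₙ(O). -/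
open Matrix

/-- Every entry of the matrix lies in the subring `O`. -/
def MemO {K : Type*} [Field K] {α β : Type*} (O : Subring K) (M : Matrix α β K) : Prop :=
  ∀ i j, M i j ∈ O

/-- The matrix `J₂ₘ = [[0,1ₘ],[1ₘ,0]]`. -/
def Jmat (K : Type*) [Field K] (m : ℕ) : Matrix (Fin m ⊕ Fin m) (Fin m ⊕ Fin m) K :=
  Matrix.fromBlocks 0 1 1 0

/-- Position of an index of `Fin m ⊕ Fin r` in the concatenated ordering. -/
def idx (m : ℕ) {r : ℕ} : Fin m ⊕ Fin r → ℕ :=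
  Sum.elim (fun i => (i : ℕ)) (fun j => m + (j : ℕ))

/-- `Bₙ(O)`: upper-triangular matrices with entries in `O` and diagonal entries units of `O`,
on the index type `Fin m ⊕ Fin r` with its concatenated ordering. -/
def BO {K : Type*} [Field K] (O : Subring K) (m r : ℕ) :
    Set (Matrix (Fin m ⊕ Fin r) (Fin m ⊕ Fin r) K) :=
  {b | MemO O b ∧ (∀ p q, idx m q < idx m p → b p q = 0) ∧
    ∀ p, ∃ c ∈ O, b p p * c = 1}

/-- `U⁻_{H,O}` : matrices over `O` of block shape `[[A,0],[C,D]]` with `A` lower-triangular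
unipotent, preserving the split quadratic form `J₂ₘ`. -/
def UnegH {K : Type*} [Field K] (O : Subring K) (m : ℕ) :
    Set (Matrix (Fin m ⊕ Fin m) (Fin m ⊕ Fin m) K) :=
  {g | MemO O g ∧ (∀ i j, g (Sum.inl i) (Sum.inr j) = 0) ∧
    (∀ i j : Fin m, (i : ℕ) < (j : ℕ) → g (Sum.inl i) (Sum.inl j) = 0) ∧
    (∀ i, g (Sum.inl i) (Sum.inl i) = 1) ∧
    gᵀ * Jmat K m * g = Jmat K m}

/-- `𝒱` : block matrices `[[1ₘ,0],[Z₃,Z₄]]` with `Z₃, Z₄` over `O`. -/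
def Vcal {K : Type*} [Field K] (O : Subring K) (m r : ℕ) :
    Set (Matrix (Fin m ⊕ Fin m) (Fin m ⊕ Fin r) K) :=
  {V | ∃ (Z₃ : Matrix (Fin m) (Fin m) K) (Z₄ : Matrix (Fin m) (Fin r) K),
    MemO O Z₃ ∧ MemO O Z₄ ∧ V = Matrix.fromBlocks 1 0 Z₃ Z₄}

section Helpers

variable {K : Type*} [Field K] (O : Subring K)

lemma memO_mul {α β γ : Type*} [Fintype β] {M : Matrix α β K} {N : Matrix β γ K}
    (hM : MemO O M) (hN : MemO O N) : MemO O (M * N) := fun i j => by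
  rw [Matrix.mul_apply]
  exact Subring.sum_mem _ fun k _ => O.mul_mem (hM i k) (hN k j)

lemma memO_transpose {α β : Type*} {M : Matrix α β K} (hM : MemO O M) : MemO O Mᵀ :=
  fun i j => hM j i

lemma idx_eq {m r : ℕ} (x : Fin m ⊕ Fin r) : idx m x = ((finSumFinEquiv x : Fin (m + r)) : ℕ) := by
  cases x <;> simp [idx]

/-- inverse of an element of `BO` is over `O` (two-sided). -/
lemma BO_inv {m r : ℕ} {b : Matrix (Fin m ⊕ Fin r) (Fin m ⊕ Fin r) K} (hb : b ∈ BO O m r) :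
    ∃ c, MemO O c ∧ b * c = 1 ∧ c * b = 1 := by
  obtain ⟨hmem, htri, hdiag⟩ := hb
  set b₀ : Matrix (Fin m ⊕ Fin r) (Fin m ⊕ Fin r) O := fun p q => ⟨b p q, hmem p q⟩ with hb₀
  have hmap : b₀.map (O.subtype) = b := by ext p q; rfl
  have hdet : IsUnit b₀.det := by
    have h1 : (b₀.submatrix (finSumFinEquiv.symm) (finSumFinEquiv.symm)).det = b₀.det :=
      Matrix.det_submatrix_equiv_self _ _
    rw [← h1, Matrix.det_of_upperTriangular]
    · apply Finset.prod_induction _ IsUnit (fun _ _ => IsUnit.mul) isUnit_one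
      intro i _
      obtain ⟨c, hc, hbc⟩ := hdiag (finSumFinEquiv.symm i)
      exact IsUnit.of_mul_eq_one ⟨c, hc⟩ (Subtype.ext hbc)
    · intro i j hji
      apply Subtype.ext
      apply htri
      rw [idx_eq, idx_eq]
      simpa using hji
  obtain ⟨u, hu⟩ := (Matrix.isUnit_iff_isUnit_det b₀).mpr hdet
  refine ⟨(↑u⁻¹ : Matrix _ _ O).map O.subtype, fun i j => ((↑u⁻¹ : Matrix _ _ O) i j).2, ?_, ?_⟩
  · rw [← hmap, ← Matrix.map_mul, ← hu, Units.mul_inv,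
      Matrix.map_one _ (map_zero _) (map_one _)]
  · rw [← hmap, ← Matrix.map_mul, ← hu, Units.inv_mul,
      Matrix.map_one _ (map_zero _) (map_one _)]

lemma UnegH_mul {m : ℕ} {g₁ g₂ : Matrix (Fin m ⊕ Fin m) (Fin m ⊕ Fin m) K}
    (h₁ : g₁ ∈ UnegH O m) (h₂ : g₂ ∈ UnegH O m) : g₁ * g₂ ∈ UnegH O m := by
  obtain ⟨hm₁, hz₁, hl₁, hd₁, hJ₁⟩ := h₁
  obtain ⟨hm₂, hz₂, hl₂, hd₂, hJ₂⟩ := h₂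
  refine ⟨memO_mul O hm₁ hm₂, ?_, ?_, ?_, ?_⟩
  · intro i j
    rw [Matrix.mul_apply]
    apply Finset.sum_eq_zero
    rintro (k | k) _
    · rw [hz₂ k j, mul_zero]
    · rw [hz₁ i k, zero_mul]
  · intro i j hij
    rw [Matrix.mul_apply]
    apply Finset.sum_eq_zero
    rintro (k | k) _
    · by_cases hik : (i : ℕ) < (k : ℕ)
      · rw [hl₁ i k hik, zero_mul]
      · rw [hl₂ k j (by omega), mul_zero]
    · rw [hz₁ i k, zero_mul]
  · intro i
    rw [Matrix.mul_apply, Finset.sum_eq_single (Sum.inl i)]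
    · rw [hd₁ i, hd₂ i, one_mul]
    · rintro (k | k) _ hk
      · rcases lt_trichotomy (i : ℕ) (k : ℕ) with h | h | h
        · rw [hl₁ i k h, zero_mul]
        · exact absurd (by exact congrArg Sum.inl (Fin.ext h.symm)) hk
        · rw [hl₂ k i h, mul_zero]
      · rw [hz₁ i k, zero_mul]
    · intro h; exact absurd (Finset.mem_univ _) h
  · rw [Matrix.transpose_mul]
    calc g₂ᵀ * g₁ᵀ * Jmat K m * (g₁ * g₂) = g₂ᵀ * (g₁ᵀ * Jmat K m * g₁) * g₂ := by
          simp only [Matrix.mul_assoc]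
      _ = Jmat K m := by rw [hJ₁, hJ₂]

lemma unip_mem {m : ℕ} {C : Matrix (Fin m) (Fin m) K} (hC : MemO O C) (hCt : Cᵀ = -C) :
    Matrix.fromBlocks 1 0 C 1 ∈ UnegH O m := by
  refine ⟨?_, ?_, ?_, ?_, ?_⟩
  · rintro (i | i) (j | j)
    · simp only [Matrix.fromBlocks_apply₁₁, Matrix.one_apply]
      split
      exacts [one_mem O, zero_mem O]
    · simpa using zero_mem O
    · exact hC i j
    · simp only [Matrix.fromBlocks_apply₂₂, Matrix.one_apply]
      split
      exacts [one_mem O, zero_mem O]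
  · intro i j; simp
  · intro i j hij
    simp only [Matrix.fromBlocks_apply₁₁]
    rw [Matrix.one_apply_ne (fun h => by omega)]
  · intro i; simp
  · rw [Jmat, Matrix.fromBlocks_transpose, Matrix.fromBlocks_multiply, Matrix.fromBlocks_multiply]
    simp [hCt]

end Helpers

section MoreHelpers

variable {K : Type*} [Field K] (O : Subring K)

lemma memO_fromBlocks {α β γ δ : Type*} {A : Matrix α β K} {B : Matrix α δ K}
    {C : Matrix γ β K} {D : Matrix γ δ K} (hA : MemO O A) (hB : MemO O B)
    (hC : MemO O C) (hD : MemO O D) : MemO O (Matrix.fromBlocks A B C D) := by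
  rintro (i | i) (j | j)
  exacts [hA i j, hB i j, hC i j, hD i j]

lemma sandwich {m r : ℕ} (J : Matrix (Fin m ⊕ Fin m) (Fin m ⊕ Fin m) K)
    {u : Matrix (Fin m ⊕ Fin m) (Fin m ⊕ Fin m) K} (hu : uᵀ * J * u = J)
    (P : Matrix (Fin m ⊕ Fin m) (Fin m ⊕ Fin r) K)
    (b : Matrix (Fin m ⊕ Fin r) (Fin m ⊕ Fin r) K) :
    (u * P * b)ᵀ * J * (u * P * b) = bᵀ * (Pᵀ * J * P) * b := by
  have h : (u * P * b)ᵀ * J * (u * P * b) = bᵀ * (Pᵀ * ((uᵀ * J * u) * (P * b))) := by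
    simp only [Matrix.transpose_mul, Matrix.mul_assoc]
  rw [h, hu]
  simp only [Matrix.mul_assoc]

end MoreHelpers

/-- The measure-free core of Theorem 2.5 (Case OS0): equality of the supports of the two
`Uₚ`-averaged Schwartz functions. -/
theorem support_equality_OS0 {K : Type*} [Field K] (O : Subring K) (h2 : IsUnit (2 : O))
    (m n : ℕ) (hm : 1 ≤ m) (hmn : m ≤ n)
    (a : Fin m → Kˣ) (d : Kˣ)
    (hstep : ∀ i j : Fin m, (i : ℕ) + 1 = (j : ℕ) → (a i : K) * ((a j : K))⁻¹ ∈ O)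
    (hlast : ((a ⟨m - 1, by omega⟩ : K)) ^ 2 ∈ O)
    (had : (a ⟨m - 1, by omega⟩ : K) * ((d : K))⁻¹ ∈ O)
    (hd2 : ((d : K)) ^ 2 ∈ O) :
    {X : Matrix (Fin m ⊕ Fin m) (Fin m ⊕ Fin (n - m)) K |
        ∃ u ∈ UnegH O m, ∃ V ∈ Vcal O m (n - m), ∃ b ∈ BO O m (n - m),
          X = u * (Matrix.fromBlocks (Matrix.diagonal fun i => (a i : K)) 0 0
              (Matrix.diagonal fun i => ((a i : K))⁻¹))⁻¹ * V * b} =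
      {X | MemO O (Xᵀ * Jmat K m * X)} ∩
        {X | ∃ u ∈ UnegH O m, ∃ V ∈ Vcal O m (n - m), ∃ b ∈ BO O m (n - m),
          X = u * V * ((Matrix.diagonal
              (Sum.elim (fun i => (a i : K)) (fun _ => (d : K))))⁻¹ :
                Matrix (Fin m ⊕ Fin (n - m)) (Fin m ⊕ Fin (n - m)) K) * b} := by
  have hne : ∀ i, (a i : K) ≠ 0 := fun i => Units.ne_zero (a i)
  have hdne : (d : K) ≠ 0 := Units.ne_zero d
  set last : Fin m := ⟨m - 1, by omega⟩ with hlastdef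
  -- telescoping ratio facts
  have H : ∀ k : ℕ, ∀ i j : Fin m, (i : ℕ) + k = (j : ℕ) → (a i : K) * ((a j : K))⁻¹ ∈ O := by
    intro k
    induction k with
    | zero =>
      intro i j hij
      have : i = j := Fin.ext (by omega)
      subst this
      rw [mul_inv_cancel₀ (hne i)]
      exact one_mem O
    | succ k ih =>
      intro i j hij
      have hk : (i : ℕ) + k < m := by omega
      have h1 := ih i ⟨(i : ℕ) + k, hk⟩ rfl
      have h2 := hstep ⟨(i : ℕ) + k, hk⟩ j (by simp; omega)
      have heq : (a i : K) * ((a j : K))⁻¹ =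
          ((a i : K) * ((a ⟨(i : ℕ) + k, hk⟩ : K))⁻¹) *
          ((a ⟨(i : ℕ) + k, hk⟩ : K) * ((a j : K))⁻¹) := by
        field_simp
      rw [heq]
      exact O.mul_mem h1 h2
  have hrat : ∀ i : Fin m, (a i : K) * ((a last : K))⁻¹ ∈ O := fun i =>
    H ((last : ℕ) - (i : ℕ)) i last (by simp only [hlastdef]; omega)
  have haa : ∀ i j, (a i : K) * (a j : K) ∈ O := by
    intro i j
    have heq : (a i : K) * (a j : K) =
        ((a i : K) * ((a last : K))⁻¹) * ((a j : K) * ((a last : K))⁻¹) *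
          ((a last : K)) ^ 2 := by
      field_simp
    rw [heq]
    exact O.mul_mem (O.mul_mem (hrat i) (hrat j)) hlast
  have hadm : ∀ i, (a i : K) * (d : K) ∈ O := by
    intro i
    have heq : (a i : K) * (d : K) =
        ((a i : K) * ((a last : K))⁻¹) * ((a last : K) * ((d : K))⁻¹) * ((d : K)) ^ 2 := by
      field_simp
    rw [heq]
    exact O.mul_mem (O.mul_mem (hrat i) had) hd2
  -- one half
  obtain ⟨v, hv⟩ := h2
  set oc : K := (((v⁻¹ : Oˣ) : O) : K) with hocdef
  have hocO : oc ∈ O := ((v⁻¹ : Oˣ) : O).2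
  have hoc : oc * 2 = 1 := by
    have h : ((v⁻¹ : Oˣ) : O) * (2 : O) = 1 := by
      rw [← hv]
      exact_mod_cast v.inv_mul
    exact_mod_cast congrArg (Subring.subtype O) h
  -- diagonal blocks
  set D : Matrix (Fin m) (Fin m) K := Matrix.diagonal (fun i => (a i : K)) with hD
  set Di : Matrix (Fin m) (Fin m) K := Matrix.diagonal (fun i => ((a i : K))⁻¹) with hDi
  have hDDi : D * Di = 1 := by
    rw [hD, hDi, Matrix.diagonal_mul_diagonal, ← Matrix.diagonal_one,
      Matrix.diagonal_eq_diagonal_iff]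
    exact fun i => mul_inv_cancel₀ (hne i)
  have hDiD : Di * D = 1 := by
    rw [hD, hDi, Matrix.diagonal_mul_diagonal, ← Matrix.diagonal_one,
      Matrix.diagonal_eq_diagonal_iff]
    exact fun i => inv_mul_cancel₀ (hne i)
  have Tinv : (Matrix.fromBlocks D 0 0 Di)⁻¹ = Matrix.fromBlocks Di 0 0 D := by
    apply Matrix.inv_eq_right_inv
    rw [Matrix.fromBlocks_multiply]
    simp only [Matrix.mul_zero, Matrix.zero_mul, add_zero, zero_add, hDDi, hDiD]
    exact Matrix.fromBlocks_one
  set w : Fin m ⊕ Fin (n - m) → K := Sum.elim (fun i => ((a i : K))⁻¹) (fun _ => ((d : K))⁻¹)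
    with hw
  have Ainv : (Matrix.diagonal (Sum.elim (fun i => (a i : K)) (fun _ => (d : K))))⁻¹ =
      Matrix.diagonal w := by
    apply Matrix.inv_eq_right_inv
    rw [Matrix.diagonal_mul_diagonal, ← Matrix.diagonal_one,
      Matrix.diagonal_eq_diagonal_iff]
    rintro (i | j)
    · exact mul_inv_cancel₀ (hne i)
    · exact mul_inv_cancel₀ hdne
  have hwblk : Matrix.diagonal w =
      Matrix.fromBlocks Di 0 0
        (Matrix.diagonal fun _ : Fin (n - m) => ((d : K))⁻¹) := by
    rw [hDi, Matrix.fromBlocks_diagonal]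
  -- J-invariance of the T-block
  have hJT : (Matrix.fromBlocks Di 0 0 D)ᵀ * Jmat K m * (Matrix.fromBlocks Di 0 0 D) =
      Jmat K m := by
    have h1 : Diᵀ = Di := by rw [hDi, Matrix.diagonal_transpose]
    have h2 : Dᵀ = D := by rw [hD, Matrix.diagonal_transpose]
    rw [Jmat, Matrix.fromBlocks_transpose, Matrix.fromBlocks_multiply,
      Matrix.fromBlocks_multiply, h1, h2]
    simp only [Matrix.transpose_zero, Matrix.mul_zero, Matrix.zero_mul, Matrix.mul_one,
      Matrix.one_mul, add_zero, zero_add, hDDi, hDiD]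
  -- conjugation of J by V
  have hVJV : ∀ (Z₃ : Matrix (Fin m) (Fin m) K) (Z₄ : Matrix (Fin m) (Fin (n - m)) K),
      (Matrix.fromBlocks 1 0 Z₃ Z₄ : Matrix (Fin m ⊕ Fin m) (Fin m ⊕ Fin (n - m)) K)ᵀ * Jmat K m *
        (Matrix.fromBlocks 1 0 Z₃ Z₄ : Matrix (Fin m ⊕ Fin m) (Fin m ⊕ Fin (n - m)) K) =
        Matrix.fromBlocks (Z₃ᵀ + Z₃) Z₄ Z₄ᵀ 0 := by
    intro Z₃ Z₄
    rw [Jmat, Matrix.fromBlocks_transpose, Matrix.fromBlocks_multiply, Matrix.fromBlocks_multiply]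
    simp only [Matrix.transpose_zero, Matrix.transpose_one, Matrix.mul_zero, Matrix.zero_mul,
      Matrix.mul_one, Matrix.one_mul, add_zero, zero_add]
  ext X
  simp only [Set.mem_setOf_eq, Set.mem_inter_iff]
  constructor
  · rintro ⟨u, hu, V, ⟨Z₃, Z₄, hZ₃, hZ₄, rfl⟩, b, hb, rfl⟩
    rw [Tinv]
    set Tb : Matrix (Fin m ⊕ Fin m) (Fin m ⊕ Fin m) K := Matrix.fromBlocks Di 0 0 D with hTb
    set VV : Matrix (Fin m ⊕ Fin m) (Fin m ⊕ Fin (n - m)) K := Matrix.fromBlocks 1 0 Z₃ Z₄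
      with hVV
    set W₃ : Matrix (Fin m) (Fin m) K := Matrix.of fun i j => (a i : K) * Z₃ i j * (a j : K)
      with hW₃
    set W₄ : Matrix (Fin m) (Fin (n - m)) K :=
      Matrix.of fun i j => (a i : K) * Z₄ i j * (d : K) with hW₄
    set VW : Matrix (Fin m ⊕ Fin m) (Fin m ⊕ Fin (n - m)) K := Matrix.fromBlocks 1 0 W₃ W₄
      with hVW
    have hkey : Tb * VV = VW * Matrix.diagonal w := by
      rw [hTb, hVV, hVW, hwblk, Matrix.fromBlocks_multiply, Matrix.fromBlocks_multiply]
      ext p q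
      match p, q with
      | Sum.inl i, Sum.inl j => simp
      | Sum.inl i, Sum.inr j => simp
      | Sum.inr i, Sum.inl j =>
        simp only [Matrix.fromBlocks_apply₂₁, Matrix.add_apply, Matrix.zero_mul,
          Matrix.mul_zero, Matrix.zero_apply, add_zero, zero_add, Matrix.mul_one,
          Matrix.one_mul, hD, hDi, hW₃, Matrix.diagonal_mul, Matrix.mul_diagonal,
          Matrix.of_apply]
        exact (mul_inv_cancel_right₀ (hne j) _).symm
      | Sum.inr i, Sum.inr j =>
        simp only [Matrix.fromBlocks_apply₂₂, Matrix.add_apply, Matrix.zero_mul,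
          Matrix.mul_zero, Matrix.zero_apply, add_zero, zero_add, Matrix.mul_one,
          Matrix.one_mul, hD, hW₄, Matrix.diagonal_mul, Matrix.mul_diagonal,
          Matrix.of_apply]
        exact (mul_inv_cancel_right₀ hdne _).symm
    constructor
    · -- integrality of XᵀJX
      have hre : u * Tb * VV * b = u * (Tb * VV) * b := by
        simp only [Matrix.mul_assoc]
      rw [hre, sandwich (Jmat K m) hu.2.2.2.2 (Tb * VV) b]
      have hP : (Tb * VV)ᵀ * Jmat K m * (Tb * VV) =
          VVᵀ * (Tbᵀ * Jmat K m * Tb) * VV := by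
        simp only [Matrix.transpose_mul, Matrix.mul_assoc]
      rw [hP, hJT, hVV, hVJV]
      exact memO_mul O (memO_mul O (memO_transpose O hb.1)
        (memO_fromBlocks O (fun i j => add_mem (hZ₃ j i) (hZ₃ i j)) hZ₄
          (memO_transpose O hZ₄) (fun i j => zero_mem O))) hb.1
    · -- membership in the second support set
      refine ⟨u, hu, VW, ⟨W₃, W₄, ?_, ?_, hVW⟩, b, hb, ?_⟩
      · intro i j
        have heq : W₃ i j = Z₃ i j * ((a i : K) * (a j : K)) := by
          rw [hW₃, Matrix.of_apply]; ring
        rw [heq]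
        exact O.mul_mem (hZ₃ i j) (haa i j)
      · intro i j
        have heq : W₄ i j = Z₄ i j * ((a i : K) * (d : K)) := by
          rw [hW₄, Matrix.of_apply]; ring
        rw [heq]
        exact O.mul_mem (hZ₄ i j) (hadm i)
      · rw [Ainv]
        have h := congrArg (fun M => u * M * b) hkey
        simpa only [Matrix.mul_assoc] using h
  · rintro ⟨hXO, u, hu, V, ⟨Z₃, Z₄, hZ₃, hZ₄, rfl⟩, b, hb, rfl⟩
    obtain ⟨c, hcO, hbc, hcb⟩ := BO_inv O hb
    rw [Ainv] at hXO
    set VV : Matrix (Fin m ⊕ Fin m) (Fin m ⊕ Fin (n - m)) K := Matrix.fromBlocks 1 0 Z₃ Z₄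
      with hVV
    have hre : u * VV * Matrix.diagonal w * b = u * (VV * Matrix.diagonal w) * b := by
      simp only [Matrix.mul_assoc]
    rw [hre, sandwich (Jmat K m) hu.2.2.2.2 (VV * Matrix.diagonal w) b] at hXO
    set P : Matrix (Fin m ⊕ Fin m) (Fin m ⊕ Fin (n - m)) K := VV * Matrix.diagonal w with hPdef
    have e1 : cᵀ * (bᵀ * (Pᵀ * Jmat K m * P) * b) * c = Pᵀ * Jmat K m * P := by
      have h : cᵀ * (bᵀ * (Pᵀ * Jmat K m * P) * b) * c =
          (b * c)ᵀ * (Pᵀ * Jmat K m * P) * (b * c) := by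
        simp only [Matrix.transpose_mul, Matrix.mul_assoc]
      rw [h, hbc, Matrix.transpose_one, Matrix.one_mul, Matrix.mul_one]
    have hQO : MemO O (Pᵀ * Jmat K m * P) := by
      rw [← e1]
      exact memO_mul O (memO_mul O (memO_transpose O hcO) hXO) hcO
    have hform : Pᵀ * Jmat K m * P =
        Matrix.diagonal w * Matrix.fromBlocks (Z₃ᵀ + Z₃) Z₄ Z₄ᵀ 0 * Matrix.diagonal w := by
      have h : Pᵀ * Jmat K m * P =
          (Matrix.diagonal w)ᵀ * (VVᵀ * Jmat K m * VV) * Matrix.diagonal w := by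
        rw [hPdef]
        simp only [Matrix.transpose_mul, Matrix.mul_assoc]
      rw [h, hVV, hVJV, Matrix.diagonal_transpose]
    have h11 : ∀ i j : Fin m, ((a i : K))⁻¹ * (Z₃ j i + Z₃ i j) * ((a j : K))⁻¹ ∈ O := by
      intro i j
      have h := hQO (Sum.inl i) (Sum.inl j)
      rw [hform] at h
      rw [Matrix.mul_diagonal, Matrix.diagonal_mul] at h
      simpa [hw, mul_assoc, mul_comm, mul_left_comm] using h
    have h12 : ∀ (i : Fin m) (j : Fin (n - m)), ((a i : K))⁻¹ * Z₄ i j * ((d : K))⁻¹ ∈ O := by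
      intro i j
      have h := hQO (Sum.inl i) (Sum.inr j)
      rw [hform] at h
      rw [Matrix.mul_diagonal, Matrix.diagonal_mul] at h
      simpa [hw, mul_assoc] using h
    set C : Matrix (Fin m) (Fin m) K := Matrix.of fun i j => (Z₃ i j - Z₃ j i) * oc with hC
    have hCO : MemO O C := fun i j => O.mul_mem (sub_mem (hZ₃ i j) (hZ₃ j i)) hocO
    have hCt : Cᵀ = -C := by
      ext i j
      simp only [Matrix.transpose_apply, Matrix.neg_apply, hC, Matrix.of_apply]
      ring
    set Z₃' : Matrix (Fin m) (Fin m) K :=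
      Matrix.of fun i j => ((a i : K))⁻¹ * (Z₃ j i + Z₃ i j) * ((a j : K))⁻¹ * oc with hZ₃'
    set Z₄' : Matrix (Fin m) (Fin (n - m)) K :=
      Matrix.of fun i j => ((a i : K))⁻¹ * Z₄ i j * ((d : K))⁻¹ with hZ₄'
    set GG : Matrix (Fin m ⊕ Fin m) (Fin m ⊕ Fin m) K := Matrix.fromBlocks 1 0 C 1 with hGG
    set Tb : Matrix (Fin m ⊕ Fin m) (Fin m ⊕ Fin m) K := Matrix.fromBlocks Di 0 0 D with hTb
    set VW : Matrix (Fin m ⊕ Fin m) (Fin m ⊕ Fin (n - m)) K := Matrix.fromBlocks 1 0 Z₃' Z₄'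
      with hVW
    have hmain : VV * Matrix.diagonal w = GG * Tb * VW := by
      rw [hVV, hGG, hTb, hVW, hwblk, Matrix.fromBlocks_multiply, Matrix.fromBlocks_multiply,
        Matrix.fromBlocks_multiply]
      ext p q
      match p, q with
      | Sum.inl i, Sum.inl j => simp
      | Sum.inl i, Sum.inr j => simp
      | Sum.inr i, Sum.inl j =>
        simp only [Matrix.fromBlocks_apply₂₁, Matrix.add_apply, Matrix.zero_mul,
          Matrix.mul_zero, Matrix.zero_apply, add_zero, zero_add, Matrix.mul_one,
          Matrix.one_mul, hD, hDi, hC, hZ₃', Matrix.diagonal_mul, Matrix.mul_diagonal,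
          Matrix.of_apply]
        have hai : (a i : K) * ((a i : K))⁻¹ = 1 := mul_inv_cancel₀ (hne i)
        linear_combination (-(Z₃ i j * ((a j : K))⁻¹)) * hoc -
          (Z₃ j i + Z₃ i j) * ((a j : K))⁻¹ * oc * hai
      | Sum.inr i, Sum.inr j =>
        simp only [Matrix.fromBlocks_apply₂₂, Matrix.add_apply, Matrix.zero_mul,
          Matrix.mul_zero, Matrix.zero_apply, add_zero, zero_add, Matrix.mul_one,
          Matrix.one_mul, hD, hZ₄', Matrix.diagonal_mul, Matrix.mul_diagonal,
          Matrix.of_apply]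
        have hai : (a i : K) * ((a i : K))⁻¹ = 1 := mul_inv_cancel₀ (hne i)
        linear_combination (-(Z₄ i j * ((d : K))⁻¹)) * hai
    refine ⟨u * GG, UnegH_mul O hu (hGG ▸ unip_mem O hCO hCt), VW,
      ⟨Z₃', Z₄', fun i j => O.mul_mem (h11 i j) hocO, fun i j => h12 i j, hVW⟩,
      b, hb, ?_⟩
    rw [Tinv, Ainv]
    have h := congrArg (fun M => u * M * b) hmain
    simpa only [Matrix.mul_assoc] using h
end

section
/- Let K be a field and O a subring of K in which 2 is a unit. Let 1 ≤ m ≤ n, let a₁,…,aₘ,d ∈ Kˣ be arbitrary, and set D = diag(a₁,…,aₘ,d,…,d) ∈ GLₙ(K). Let Y₃ ∈ M_{m,m}(O) and Y₄ ∈ M_{m,n−m}(O), and set X = [[1ₘ,0],[Y₃,Y₄]]·D⁻¹ ∈ M_{2m,n}(K). If Xᵀ·J₂ₘ·X ∈ Mₙ(O), then there exist C ∈ M_{m,m}(O) with Cᵀ = −C, Z₃ ∈ M_{m,m}(O), and Z₄ ∈ M_{m,n−m}(O) such that X = [[1ₘ,0],[C,1ₘ]] · diag(a₁⁻¹,…,aₘ⁻¹,a₁,…,aₘ)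 · [[1ₘ,0],[Z₃,Z₄]]. -/
open Matrix

/-- The key normal-form step in the proof of Theorem 2.5 in Case OS0 (equation (eq:X0)). -/
theorem normal_form_OS0 {K : Type*} [Field K] (O : Subring K) (h2 : IsUnit (2 : O))
    (m n : ℕ) (hm : 1 ≤ m) (hmn : m ≤ n)
    (a : Fin m → Kˣ) (d : Kˣ)
    (Y₃ : Matrix (Fin m) (Fin m) K) (Y₄ : Matrix (Fin m) (Fin (n - m)) K)
    (hY₃ : MemO O Y₃) (hY₄ : MemO O Y₄)
    (X : Matrix (Fin m ⊕ Fin m) (Fin m ⊕ Fin (n - m)) K)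
    (hX : X = Matrix.fromBlocks 1 0 Y₃ Y₄ *
      (Matrix.diagonal (Sum.elim (fun i => (a i : K)) (fun _ => (d : K))))⁻¹)
    (hint : MemO O (Xᵀ * Jmat K m * X)) :
    ∃ (C Z₃ : Matrix (Fin m) (Fin m) K) (Z₄ : Matrix (Fin m) (Fin (n - m)) K),
      MemO O C ∧ Cᵀ = -C ∧ MemO O Z₃ ∧ MemO O Z₄ ∧
      X = Matrix.fromBlocks 1 0 C 1 *
        Matrix.fromBlocks (Matrix.diagonal fun i => ((a i : K))⁻¹) 0 0
          (Matrix.diagonal fun i => (a i : K)) *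
        Matrix.fromBlocks 1 0 Z₃ Z₄ := by
  classical
  -- half lemma
  obtain ⟨u, hu⟩ := h2
  have h2K : ((u : O) : K) = (2 : K) := by rw [hu]; norm_cast
  have hmul : (2 : K) * ((↑(u⁻¹) : O) : K) = 1 := by
    rw [← h2K, ← Subring.coe_mul]
    norm_cast
    simp
  have h2ne : (2 : K) ≠ 0 := left_ne_zero_of_mul_eq_one hmul
  have hhalf : (2 : K)⁻¹ = ((↑(u⁻¹) : O) : K) := inv_eq_of_mul_eq_one_right hmul
  have half_mem : ∀ x : K, x ∈ O → (2 : K)⁻¹ * x ∈ O := by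
    intro x hx
    rw [hhalf]
    exact O.mul_mem (SetLike.coe_mem _) hx
  set P : Matrix (Fin m) (Fin m) K := Matrix.diagonal fun i => ((a i : K))⁻¹ with hP
  have hinv : (Matrix.diagonal (Sum.elim (fun i => (a i : K)) (fun _ : Fin (n - m) => (d : K))))⁻¹ =
      Matrix.diagonal (Sum.elim (fun i => ((a i : K))⁻¹) (fun _ : Fin (n - m) => ((d : K))⁻¹)) := by
    apply Matrix.inv_eq_right_inv
    rw [Matrix.diagonal_mul_diagonal]
    ext k l
    rcases k with i | i <;> rcases l with j | j <;>
      simp [Matrix.diagonal_apply, Matrix.one_apply]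
  have hX' : X = Matrix.fromBlocks P 0 (Y₃ * P) (Y₄ * (Matrix.diagonal fun _ : Fin (n - m) => ((d : K))⁻¹ : Matrix (Fin (n - m)) (Fin (n - m)) K)) := by
    erw [hX, hinv, ← Matrix.fromBlocks_diagonal, Matrix.fromBlocks_multiply]
    simp [hP]
  have hprod : Xᵀ * Jmat K m * X =
      Matrix.fromBlocks (P * (Y₃ + Y₃ᵀ) * P)
        (P * (Y₄ * (Matrix.diagonal fun _ : Fin (n - m) => ((d : K))⁻¹ : Matrix (Fin (n - m)) (Fin (n - m)) K)))
        ((Y₄ * (Matrix.diagonal fun _ : Fin (n - m) => ((d : K))⁻¹ : Matrix (Fin (n - m)) (Fin (n - m)) K))ᵀ * P) 0 := by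
    rw [hX', Jmat, Matrix.fromBlocks_transpose, Matrix.fromBlocks_multiply,
      Matrix.fromBlocks_multiply]
    have hPT : Pᵀ = P := by simp [hP, Matrix.diagonal_transpose]
    simp [hPT, Matrix.transpose_mul, mul_add, add_mul, Matrix.mul_assoc]
    rw [add_comm]
  -- entry facts
  have h11 : ∀ i j, ((a i : K))⁻¹ * (Y₃ i j + Y₃ j i) * ((a j : K))⁻¹ ∈ O := by
    intro i j
    have := hint (Sum.inl i) (Sum.inl j)
    rw [hprod, Matrix.fromBlocks_apply₁₁] at this
    simpa [hP, Matrix.mul_diagonal, Matrix.diagonal_mul, Matrix.add_apply, Matrix.transpose_apply,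
      mul_comm, mul_left_comm, mul_assoc] using this
  have h12 : ∀ i j, ((a i : K))⁻¹ * (Y₄ i j * ((d : K))⁻¹) ∈ O := by
    intro i j
    have := hint (Sum.inl i) (Sum.inr j)
    rw [hprod, Matrix.fromBlocks_apply₁₂] at this
    simpa [hP, Matrix.mul_diagonal, Matrix.diagonal_mul, mul_assoc] using this
  refine ⟨Matrix.of fun i j => (2 : K)⁻¹ * (Y₃ i j - Y₃ j i),
    Matrix.of fun i j => (2 : K)⁻¹ * (((a i : K))⁻¹ * (Y₃ i j + Y₃ j i) * ((a j : K))⁻¹),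
    Matrix.of fun i j => ((a i : K))⁻¹ * (Y₄ i j * ((d : K))⁻¹),
    ?_, ?_, ?_, ?_, ?_⟩
  · intro i j
    exact half_mem _ (O.sub_mem (hY₃ i j) (hY₃ j i))
  · ext i j
    simp [Matrix.transpose_apply]
    ring
  · intro i j
    exact half_mem _ (h11 i j)
  · intro i j
    exact h12 i j
  · have hai : ∀ i : Fin m, (a i : K) * ((a i : K))⁻¹ = 1 := fun i =>
      mul_inv_cancel₀ (Units.ne_zero (a i))
    set A := Matrix.diagonal fun i => (a i : K) with hA
    have hZ4 : A * (Matrix.of fun i j => ((a i : K))⁻¹ * (Y₄ i j * ((d : K))⁻¹)) =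
        Y₄ * (Matrix.diagonal fun _ : Fin (n - m) => ((d : K))⁻¹ : Matrix (Fin (n - m)) (Fin (n - m)) K) := by
      ext i j
      simp [hA, Matrix.diagonal_mul, Matrix.mul_diagonal, ← mul_assoc, hai]
    have hZ3 : (Matrix.of fun i j => (2 : K)⁻¹ * (Y₃ i j - Y₃ j i)) * P +
        A * (Matrix.of fun i j =>
          (2 : K)⁻¹ * (((a i : K))⁻¹ * (Y₃ i j + Y₃ j i) * ((a j : K))⁻¹)) = Y₃ * P := by
      ext i j
      have hane : ∀ i, (a i : K) ≠ 0 := fun i => Units.ne_zero _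
      simp only [hA, hP, Matrix.add_apply, Matrix.mul_diagonal, Matrix.diagonal_mul,
        Matrix.of_apply]
      field_simp
      ring
    erw [hX', Matrix.fromBlocks_multiply, Matrix.fromBlocks_multiply]
    simp only [Matrix.one_mul, Matrix.mul_one, Matrix.zero_mul, Matrix.mul_zero, add_zero,
      zero_add]
    rw [hZ3, hZ4]
end

section
/- Let K be a field equipped with a ring involution x ↦ x̄, and let O be a subring of K stable under the involution with 2 a unit in O. Let 1 ≤ m ≤ n, let a₁,…,aₘ,d ∈ Kˣ be arbitrary, and set D = diag(a₁,…,aₘ,d,…,d) ∈ GLₙ(K). Let Y₃ ∈ M_{m,m}(O) and Y₄ ∈ M_{m,n−m}(O), and set X = [[1ₘ,0],[Y₃,Y₄]]·D⁻¹ ∈ M_{2m,n}(K). If Xᴴ·J₂ₘ·X ∈ Mₙ(O) (Xᴴ the conjugate transpose with respect to the involution), then there exist C ∈ M_{m,m}(O) with Cᴴ = −C, Z₃ ∈ M_{m,m}(O), and Z₄ ∈ M_{m,n−m}(O) such that X = [[1ₘ,0],[C,1ₘ]] · diag(a₁⁻¹,…,aₘ⁻¹,ā₁,…,āₘ) ·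 [[1ₘ,0],[Z₃,Z₄]]. -/
open Matrix

/-- The key normal-form step in the proof of Theorem 2.5 in the even unitary case (Case U0). -/
theorem normal_form_U0 {K : Type*} [Field K] [StarRing K] (O : Subring K)
    (hOstar : ∀ x ∈ O, star x ∈ O) (h2 : IsUnit (2 : O))
    (m n : ℕ) (hm : 1 ≤ m) (hmn : m ≤ n)
    (a : Fin m → Kˣ) (d : Kˣ)
    (Y₃ : Matrix (Fin m) (Fin m) K) (Y₄ : Matrix (Fin m) (Fin (n - m)) K)
    (hY₃ : MemO O Y₃) (hY₄ : MemO O Y₄)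
    (X : Matrix (Fin m ⊕ Fin m) (Fin m ⊕ Fin (n - m)) K)
    (hX : X = Matrix.fromBlocks 1 0 Y₃ Y₄ *
      (Matrix.diagonal (Sum.elim (fun i => (a i : K)) (fun _ => (d : K))))⁻¹)
    (hint : MemO O (Xᴴ * Jmat K m * X)) :
    ∃ (C Z₃ : Matrix (Fin m) (Fin m) K) (Z₄ : Matrix (Fin m) (Fin (n - m)) K),
      MemO O C ∧ Cᴴ = -C ∧ MemO O Z₃ ∧ MemO O Z₄ ∧
      X = Matrix.fromBlocks 1 0 C 1 *
        Matrix.fromBlocks (Matrix.diagonal fun i => ((a i : K))⁻¹) 0 0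
          (Matrix.diagonal fun i => star (a i : K)) *
        Matrix.fromBlocks 1 0 Z₃ Z₄ := by
  classical
  obtain ⟨u, hu⟩ := h2
  set e : K := (((u⁻¹ : Oˣ) : O) : K) with he
  have heO : e ∈ O := SetLike.coe_mem _
  have he2 : e * 2 = 1 := by
    have h : ((u⁻¹ : Oˣ) : O) * 2 = 1 := by rw [← hu]; exact_mod_cast u.inv_mul
    rw [he]
    have h2 := congrArg (fun x : O => (x : K)) h
    push_cast at h2
    exact h2
  have h2K : (2 : K) ≠ 0 := by
    intro h; rw [h, mul_zero] at he2; exact one_ne_zero he2.symm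
  have heK : e = (2 : K)⁻¹ := eq_inv_of_mul_eq_one_right (by rw [mul_comm]; exact he2)
  have ha : ∀ i, (a i : K) ≠ 0 := fun i => Units.ne_zero _
  have has : ∀ i, star (a i : K) ≠ 0 := fun i => by
    simpa [star_eq_zero] using ha i
  -- inverse of the diagonal matrix
  have hprod : Matrix.diagonal (Sum.elim (fun i => (a i : K)) (fun _ : Fin (n-m) => (d : K))) *
      Matrix.diagonal (Sum.elim (fun i => ((a i : K))⁻¹) (fun _ => ((d : K))⁻¹)) = 1 := by
    rw [Matrix.diagonal_mul_diagonal]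
    convert Matrix.diagonal_one with j
    rcases j with j | j <;> simp
  have hDinv := Matrix.inv_eq_right_inv hprod
  rw [hDinv, ← Matrix.fromBlocks_diagonal] at hX
  erw [Matrix.fromBlocks_multiply] at hX
  simp only [Matrix.one_mul, Matrix.mul_one, Matrix.zero_mul, Matrix.mul_zero,
    add_zero, zero_add] at hX
  -- key entries of the invariant matrix
  have hXe11 : ∀ i j : Fin m, X (Sum.inl i) (Sum.inl j)
      = Matrix.diagonal (fun i => ((a i : K))⁻¹) i j := by
    intro i j; rw [hX]; rfl
  have hkey : ∀ i j : Fin m, (Xᴴ * Jmat K m * X) (Sum.inl i) (Sum.inl j)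
      = (star (a i : K))⁻¹ * (Y₃ i j + star (Y₃ j i)) * ((a j : K))⁻¹ := by
    intro i j
    rw [Matrix.mul_assoc]
    simp [hX, Jmat, Matrix.mul_apply, Matrix.fromBlocks_multiply, Fintype.sum_sum_type,
      Matrix.diagonal, Matrix.conjTranspose_apply, Matrix.one_apply, apply_ite,
      Finset.sum_ite_eq, Finset.sum_ite_eq', Finset.mul_sum, mul_comm, mul_left_comm,
      star_inv₀, mul_add]
    ring
  have hkey2 : ∀ (i : Fin m) (j : Fin (n - m)), (Xᴴ * Jmat K m * X) (Sum.inl i) (Sum.inr j)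
      = (star (a i : K))⁻¹ * Y₄ i j * ((d : K))⁻¹ := by
    intro i j
    rw [Matrix.mul_assoc]
    simp [hX, Jmat, Matrix.mul_apply, Matrix.fromBlocks_multiply, Fintype.sum_sum_type,
      Matrix.diagonal, Matrix.conjTranspose_apply, Matrix.one_apply, apply_ite,
      Finset.sum_ite_eq, Finset.sum_ite_eq', Finset.mul_sum, mul_comm, mul_left_comm,
      star_inv₀, mul_add]
    ring
  -- the data
  refine ⟨Matrix.of fun i j => e * (Y₃ i j - star (Y₃ j i)),
    Matrix.of fun i j => e * ((star (a i : K))⁻¹ * (Y₃ i j + star (Y₃ j i)) * ((a j : K))⁻¹),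
    Matrix.of fun i j => (star (a i : K))⁻¹ * Y₄ i j * ((d : K))⁻¹,
    ?_, ?_, ?_, ?_, ?_⟩
  · intro i j
    exact O.mul_mem heO (O.sub_mem (hY₃ i j) (hOstar _ (hY₃ j i)))
  · ext i j
    simp only [Matrix.conjTranspose_apply, Matrix.of_apply, Matrix.neg_apply, star_mul',
      star_sub, star_star]
    rw [heK]
    simp [star_inv₀]
    ring
  · intro i j
    have := hint (Sum.inl i) (Sum.inl j)
    rw [hkey i j] at this
    exact O.mul_mem heO this
  · intro i j
    have := hint (Sum.inl i) (Sum.inr j)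
    rw [hkey2 i j] at this
    exact this
  · rw [hX, Matrix.fromBlocks_multiply]
    erw [Matrix.fromBlocks_multiply]
    simp only [Matrix.one_mul, Matrix.mul_one, Matrix.zero_mul, Matrix.mul_zero,
      add_zero, zero_add]
    ext p q
    rcases p with i | i <;> rcases q with j | j
    · rfl
    · rfl
    · rw [Matrix.fromBlocks_apply₂₁, Matrix.fromBlocks_apply₂₁, Matrix.add_apply,
        Matrix.mul_diagonal, Matrix.mul_diagonal, Matrix.diagonal_mul, Matrix.of_apply,
        Matrix.of_apply, heK]
      linear_combination (-(2:K)⁻¹ * (Y₃ i j + star (Y₃ j i)) * ((a j : K))⁻¹) *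
          mul_inv_cancel₀ (has i) +
        (-(Y₃ i j * ((a j : K))⁻¹)) * mul_inv_cancel₀ h2K
    · rw [Matrix.fromBlocks_apply₂₂, Matrix.fromBlocks_apply₂₂, Matrix.mul_diagonal,
        Matrix.diagonal_mul, Matrix.of_apply]
      rw [← mul_assoc, ← mul_assoc, mul_inv_cancel₀ (has i), one_mul]
end

section
/- Let K be a field and O a valuation subring of K (for every x ∈ Kˣ, x ∈ O or x⁻¹ ∈ O) in which 2 is a unit. Let 1 ≤ m ≤ n, let a₁,…,aₘ,d ∈ Kˣ, and let u ∈ K with u² = 1. Set D = diag(a₁,…,aₘ,d,…,d) ∈ GLₙ(K). Let Y₃ ∈ M_{m,m}(O), Y₄ ∈ M_{m,n−m}(O), Y₆ ∈ M_{1,n−m}(O), and set X = [[1ₘ,0],[Y₃,Y₄],[0,Y₆]]·D⁻¹ ∈ M_{2m+1,n}(K). If Xᵀ·J_{2m+1}·X ∈ Mₙ(O), then there exist C ∈ M_{m,m}(O) with Cᵀ = −C, Z₃ ∈ M_{m,m}(O), Z₄ ∈ M_{m,n−m}(O), and Z₆ ∈ M_{1,n−m}(O) such that X = [[1ₘ,0,0],[C,1ₘ,0],[0,0,1]]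 · diag(a₁⁻¹,…,aₘ⁻¹,a₁,…,aₘ,u) · [[1ₘ,0],[Z₃,Z₄],[0,Z₆]]. -/
open Matrix

/-- The matrix `J_{2m+1} = [[0,1ₘ,0],[1ₘ,0,0],[0,0,1]]`. -/
def JmatOdd (K : Type*) [Field K] (m : ℕ) :
    Matrix ((Fin m ⊕ Fin m) ⊕ Fin 1) ((Fin m ⊕ Fin m) ⊕ Fin 1) K :=
  Matrix.fromBlocks (Matrix.fromBlocks 0 1 1 0) 0 0 1

/-- The key normal-form step in the proof of Theorem 2.5 in the odd split orthogonal case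
(Case OS1). -/
theorem normal_form_OS1 {K : Type*} [Field K] (O : Subring K)
    (hval : ∀ x : Kˣ, (x : K) ∈ O ∨ ((x : K))⁻¹ ∈ O) (h2 : IsUnit (2 : O))
    (m n : ℕ) (hm : 1 ≤ m) (hmn : m ≤ n)
    (a : Fin m → Kˣ) (d : Kˣ) (u : K) (hu : u ^ 2 = 1)
    (Y₃ : Matrix (Fin m) (Fin m) K) (Y₄ : Matrix (Fin m) (Fin (n - m)) K)
    (Y₆ : Matrix (Fin 1) (Fin (n - m)) K)
    (hY₃ : MemO O Y₃) (hY₄ : MemO O Y₄) (hY₆ : MemO O Y₆)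
    (X : Matrix ((Fin m ⊕ Fin m) ⊕ Fin 1) (Fin m ⊕ Fin (n - m)) K)
    (hX : X = Matrix.fromRows (Matrix.fromBlocks 1 0 Y₃ Y₄)
        (Matrix.fromCols (0 : Matrix (Fin 1) (Fin m) K) Y₆) *
      (Matrix.diagonal (Sum.elim (fun i => (a i : K)) (fun _ => (d : K))))⁻¹)
    (hint : MemO O (Xᵀ * JmatOdd K m * X)) :
    ∃ (C Z₃ : Matrix (Fin m) (Fin m) K) (Z₄ : Matrix (Fin m) (Fin (n - m)) K)
      (Z₆ : Matrix (Fin 1) (Fin (n - m)) K),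
      MemO O C ∧ Cᵀ = -C ∧ MemO O Z₃ ∧ MemO O Z₄ ∧ MemO O Z₆ ∧
      X = (Matrix.fromBlocks (Matrix.fromBlocks (1 : Matrix (Fin m) (Fin m) K) 0 C 1) 0 0
          (1 : Matrix (Fin 1) (Fin 1) K)) *
        Matrix.fromBlocks
          (Matrix.fromBlocks (Matrix.diagonal fun i => ((a i : K))⁻¹) 0 0
            (Matrix.diagonal fun i => (a i : K))) 0 0 (Matrix.diagonal fun _ => u) *
        Matrix.fromRows (Matrix.fromBlocks 1 0 Z₃ Z₄)
          (Matrix.fromCols (0 : Matrix (Fin 1) (Fin m) K) Z₆) := by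
  -- the inverse of 2
  obtain ⟨e₀, he₀⟩ : ∃ e₀ : O, (2 : O) * e₀ = 1 := ⟨((h2.unit⁻¹ : Oˣ) : O), by
    simpa [h2.unit_spec] using h2.unit.mul_inv⟩
  set e : K := (e₀ : K) with he_def
  have he : (2 : K) * e = 1 := by
    have := congrArg (Subring.subtype O) he₀
    simp only [map_mul, map_one] at this
    rw [he_def]; exact_mod_cast this
  have heO : e ∈ O := e₀.2
  -- square root membership from the valuation property
  have hsq : ∀ x : K, x * x ∈ O → x ∈ O := by
    intro x hx
    rcases eq_or_ne x 0 with h | h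
    · rw [h]; exact O.zero_mem
    · rcases hval (Units.mk0 x h) with h' | h'
      · simpa using h'
      · have hx' : x = x * x * x⁻¹ := by field_simp
        rw [hx']
        exact O.mul_mem hx (by simpa using h')
  -- u = ±1
  have hu' : u = 1 ∨ u = -1 := by
    rcases mul_eq_zero.mp (show (u - 1) * (u + 1) = 0 by linear_combination hu) with h | h
    · exact Or.inl (sub_eq_zero.mp h)
    · exact Or.inr (eq_neg_of_add_eq_zero_left h)
  have huO : u ∈ O := by
    rcases hu' with h | h
    · rw [h]; exact O.one_mem
    · rw [h]; exact O.neg_mem O.one_mem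
  -- rewrite the diagonal inverse
  set g : Fin m ⊕ Fin (n - m) → K := Sum.elim (fun i => (a i : K)) (fun _ => (d : K)) with hg
  have hgne : ∀ c, g c ≠ 0 := by rintro (i | i) <;> simp [hg]
  have hD : (Matrix.diagonal g)⁻¹ = Matrix.diagonal (fun c => (g c)⁻¹) := by
    refine Matrix.inv_eq_right_inv ?_
    rw [Matrix.diagonal_mul_diagonal]
    have : (fun c => g c * (g c)⁻¹) = fun _ => 1 := funext fun c => mul_inv_cancel₀ (hgne c)
    rw [this, Matrix.diagonal_one]
  rw [hD] at hX
  subst hX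
  -- entries of the integral Gram matrix
  set B : Matrix ((Fin m ⊕ Fin m) ⊕ Fin 1) (Fin m ⊕ Fin (n - m)) K :=
    Matrix.fromRows (Matrix.fromBlocks 1 0 Y₃ Y₄)
      (Matrix.fromCols (0 : Matrix (Fin 1) (Fin m) K) Y₆) *
    Matrix.diagonal (fun c => (g c)⁻¹) with hB
  have h11 : ∀ i j, (a i : K)⁻¹ * (Y₃ i j + Y₃ j i) * (a j : K)⁻¹ ∈ O := by
    intro i j
    have := hint (Sum.inl i) (Sum.inl j)
    have he : (Bᵀ * JmatOdd K m * B) (Sum.inl i) (Sum.inl j)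
        = (a i : K)⁻¹ * (Y₃ i j + Y₃ j i) * (a j : K)⁻¹ := by
      simp [hB, hg, Matrix.mul_apply, JmatOdd, Fintype.sum_sum_type, Matrix.mul_diagonal,
        Matrix.one_apply, Matrix.diagonal_apply, mul_ite, ite_mul, zero_mul, mul_zero,
        Finset.sum_ite_eq, Finset.sum_ite_eq', Finset.mul_sum, Finset.sum_mul, mul_assoc]
      try ring
    rw [← he]; exact this
  have h12 : ∀ i j, (a i : K)⁻¹ * Y₄ i j * (d : K)⁻¹ ∈ O := by
    intro i j
    have := hint (Sum.inl i) (Sum.inr j)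
    have he : (Bᵀ * JmatOdd K m * B) (Sum.inl i) (Sum.inr j)
        = (a i : K)⁻¹ * Y₄ i j * (d : K)⁻¹ := by
      simp [hB, hg, Matrix.mul_apply, JmatOdd, Fintype.sum_sum_type, Matrix.mul_diagonal,
        Matrix.one_apply, Matrix.diagonal_apply, mul_ite, ite_mul, zero_mul, mul_zero,
        Finset.sum_ite_eq, Finset.sum_ite_eq', Finset.mul_sum, Finset.sum_mul, mul_assoc]
      try ring
    rw [← he]; exact this
  have h22 : ∀ j, (Y₆ 0 j * (d : K)⁻¹) * (Y₆ 0 j * (d : K)⁻¹) ∈ O := by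
    intro j
    have := hint (Sum.inr j) (Sum.inr j)
    have he : (Bᵀ * JmatOdd K m * B) (Sum.inr j) (Sum.inr j)
        = (Y₆ 0 j * (d : K)⁻¹) * (Y₆ 0 j * (d : K)⁻¹) := by
      simp [hB, hg, Matrix.mul_apply, JmatOdd, Fintype.sum_sum_type, Matrix.mul_diagonal,
        Matrix.one_apply, Matrix.diagonal_apply, mul_ite, ite_mul, zero_mul, mul_zero,
        Finset.sum_ite_eq, Finset.sum_ite_eq', Finset.mul_sum, Finset.sum_mul, mul_assoc]
      try ring
    rw [← he]; exact this
  refine ⟨Matrix.of fun i j => (Y₃ i j - Y₃ j i) * e,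
    Matrix.of fun i j => (a i : K)⁻¹ * (Y₃ i j + Y₃ j i) * (a j : K)⁻¹ * e,
    Matrix.of fun i j => (a i : K)⁻¹ * Y₄ i j * (d : K)⁻¹,
    Matrix.of fun i j => u * (Y₆ i j * (d : K)⁻¹), ?_, ?_, ?_, ?_, ?_, ?_⟩
  · intro i j
    exact O.mul_mem (O.sub_mem (hY₃ i j) (hY₃ j i)) heO
  · ext i j
    simp [Matrix.transpose_apply]
    ring
  · intro i j
    exact O.mul_mem (h11 i j) heO
  · intro i j
    exact h12 i j
  · intro i j
    have hi : i = 0 := Subsingleton.elim i 0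
    subst hi
    exact O.mul_mem huO (hsq _ (h22 j))
  · change B = (_ : Matrix ((Fin m ⊕ Fin m) ⊕ Fin 1) ((Fin m ⊕ Fin m) ⊕ Fin 1) K) *
      (_ : Matrix ((Fin m ⊕ Fin m) ⊕ Fin 1) ((Fin m ⊕ Fin m) ⊕ Fin 1) K) *
      (_ : Matrix ((Fin m ⊕ Fin m) ⊕ Fin 1) (Fin m ⊕ Fin (n - m)) K)
    ext r c
    rcases r with (i | i) | i <;> rcases c with j | j <;>
      simp [hB, hg, Matrix.mul_apply, Fintype.sum_sum_type, Matrix.mul_diagonal,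
        Matrix.one_apply, Matrix.diagonal_apply, mul_ite, ite_mul, zero_mul, mul_zero,
        Finset.sum_ite_eq, Finset.sum_ite_eq', Finset.mul_sum, Finset.sum_mul, mul_assoc]
    · linear_combination (-(Y₃ i j * ((a j : K))⁻¹)) * he
    · have hi : i = 0 := Subsingleton.elim i 0
      rw [hi, if_pos rfl]
      linear_combination (-(Y₆ 0 j * ((d : K))⁻¹)) * hu
end

section
/- Let K be a field and O a subring of K, and let 1 ≤ m ≤ n. Let Y = [[X₁,X₂],[X₃,X₄]] ∈ M_{2m,n}(K) with X₁ ∈ B⁻ₘ(O)·Bₘ(O), X₂ ∈ M_{m,n−m}(O), X₃ ∈ M_{m,m}(O), X₄ ∈ M_{m,n−m}(O). Let w₁ ∈ M_{m,m}(K) be upper-triangular with all diagonal entries 1, let w₂ ∈ M_{m,n−m}(K), and let w₄ ∈ M_{n−m,n−m}(O) be upper-triangular with all diagonal entries 1. Then Y·[[w₁,w₂],[0,w₄]] lies in V_supp if and only if all entries of w₁ and of w₂ lie in O. -/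
open Matrix

/-- `Bₘ(O)`: upper-triangular matrices with entries in `O` and diagonal entries units of `O`. -/
def Bpos {K : Type*} [Field K] (O : Subring K) (m : ℕ) : Set (Matrix (Fin m) (Fin m) K) :=
  {M | MemO O M ∧ (∀ i j : Fin m, (j : ℕ) < (i : ℕ) → M i j = 0) ∧
    ∀ i, ∃ c ∈ O, M i i * c = 1}

/-- `B⁻ₘ(O)`: lower-triangular matrices with entries in `O` and diagonal entries units of `O`. -/
def Bneg {K : Type*} [Field K] (O : Subring K) (m : ℕ) : Set (Matrix (Fin m) (Fin m) K) :=
  {M | MemO O M ∧ (∀ i j : Fin m, (i : ℕ) < (j : ℕ) → M i j = 0) ∧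
    ∀ i, ∃ c ∈ O, M i i * c = 1}

/-- `B⁻ₘ(O)·Bₘ(O)`, the set of products. -/
def BnegBpos {K : Type*} [Field K] (O : Subring K) (m : ℕ) :
    Set (Matrix (Fin m) (Fin m) K) :=
  {M | ∃ l ∈ Bneg O m, ∃ u ∈ Bpos O m, M = l * u}

/-- `V_supp`: block matrices `[[X₁,X₂],[X₃,X₄]]` with `X₁ ∈ B⁻ₘ(O)·Bₘ(O)` and
`X₂, X₃, X₄` over `O`. -/
def Vsupp {K : Type*} [Field K] (O : Subring K) (m r : ℕ) :
    Set (Matrix (Fin m ⊕ Fin m) (Fin m ⊕ Fin r) K) :=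
  {X | X.toBlocks₁₁ ∈ BnegBpos O m ∧ MemO O X.toBlocks₁₂ ∧
    MemO O X.toBlocks₂₁ ∧ MemO O X.toBlocks₂₂}

section Aux

variable {K : Type*} [Field K] {O : Subring K}

lemma memO_mul_s8 {a b c : ℕ} {A : Matrix (Fin a) (Fin b) K} {B : Matrix (Fin b) (Fin c) K}
    (hA : MemO O A) (hB : MemO O B) : MemO O (A * B) := fun i j => by
  rw [Matrix.mul_apply]
  exact Subring.sum_mem _ fun k _ => O.mul_mem (hA i k) (hB k j)

lemma memO_add {a b : ℕ} {A B : Matrix (Fin a) (Fin b) K}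
    (hA : MemO O A) (hB : MemO O B) : MemO O (A + B) := fun i j => by
  simpa [Matrix.add_apply] using O.add_mem (hA i j) (hB i j)

lemma memO_det {k : ℕ} {M : Matrix (Fin k) (Fin k) K} (h : MemO O M) : M.det ∈ O := by
  rw [Matrix.det_apply]
  exact Subring.sum_mem _ fun σ _ =>
    zsmul_mem (Subring.prod_mem _ fun i _ => h _ _) _

lemma memO_adjugate {k : ℕ} {M : Matrix (Fin k) (Fin k) K} (h : MemO O M) :
    MemO O M.adjugate := fun i j => by
  rw [Matrix.adjugate_apply]
  apply memO_det
  intro a b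
  rw [Matrix.updateRow_apply]
  split
  · rw [Pi.single_apply]
    split
    · exact O.one_mem
    · exact O.zero_mem
  · exact h a b

/-- If `M` has entries in `O` and its determinant is a unit of `O`, then any `W` with
`M * W` over `O` is itself over `O`. -/
lemma memO_of_mul_memO {k r : ℕ} {M : Matrix (Fin k) (Fin k) K} {W : Matrix (Fin k) (Fin r) K}
    {c : K} (hM : MemO O M) (hc : c ∈ O) (hdet : M.det * c = 1)
    (hMW : MemO O (M * W)) : MemO O W := by
  have key : W = c • (M.adjugate * (M * W)) := by
    rw [← Matrix.mul_assoc, Matrix.adjugate_mul, Matrix.smul_mul, Matrix.one_mul,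
      smul_smul, mul_comm c, hdet, one_smul]
  intro i j
  rw [key]
  simp only [Matrix.smul_apply, smul_eq_mul]
  exact O.mul_mem hc ((memO_mul_s8 (memO_adjugate hM) hMW) i j)

/-- The determinant of an element of `BnegBpos O m` is a unit of `O`. -/
lemma BnegBpos.det_unit {m : ℕ} {M : Matrix (Fin m) (Fin m) K} (hM : M ∈ BnegBpos O m) :
    ∃ c ∈ O, M.det * c = 1 := by
  obtain ⟨l, ⟨hlO, hltri, hldiag⟩, u, ⟨huO, hutri, hudiag⟩, rfl⟩ := hM
  choose cl hclO hcl using hldiag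
  choose cu hcuO hcu using hudiag
  refine ⟨(∏ i, cl i) * ∏ i, cu i, O.mul_mem (Subring.prod_mem _ fun i _ => hclO i)
    (Subring.prod_mem _ fun i _ => hcuO i), ?_⟩
  have hl : l.det = ∏ i, l i i :=
    Matrix.det_of_lowerTriangular l fun i j h => hltri i j h
  have hu : u.det = ∏ i, u i i :=
    Matrix.det_of_upperTriangular fun i j h => hutri i j h
  rw [Matrix.det_mul, hl, hu]
  calc (∏ i, l i i) * (∏ i, u i i) * ((∏ i, cl i) * ∏ i, cu i)
      = (∏ i, l i i * cl i) * ∏ i, u i i * cu i := by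
        rw [Finset.prod_mul_distrib, Finset.prod_mul_distrib]; ring
    _ = 1 := by
        rw [Finset.prod_congr rfl fun i _ => hcl i, Finset.prod_congr rfl fun i _ => hcu i]
        simp

lemma BnegBpos.memO {m : ℕ} {M : Matrix (Fin m) (Fin m) K} (hM : M ∈ BnegBpos O m) :
    MemO O M := by
  obtain ⟨l, ⟨hlO, -, -⟩, u, ⟨huO, -, -⟩, rfl⟩ := hM
  exact memO_mul_s8 hlO huO

end Aux

/-- The `GLₙ`-side support claim in the proof of Theorem 2.5: for `Y ∈ V_supp`,
`Y·[[w₁,w₂],[0,w₄]] ∈ V_supp` iff `w₁` and `w₂` have entries in `O`. -/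
theorem right_translation_Vsupp {K : Type*} [Field K] (O : Subring K)
    (m n : ℕ) (hm : 1 ≤ m) (hmn : m ≤ n)
    (X₁ : Matrix (Fin m) (Fin m) K) (X₂ : Matrix (Fin m) (Fin (n - m)) K)
    (X₃ : Matrix (Fin m) (Fin m) K) (X₄ : Matrix (Fin m) (Fin (n - m)) K)
    (hX₁ : X₁ ∈ BnegBpos O m) (hX₂ : MemO O X₂) (hX₃ : MemO O X₃) (hX₄ : MemO O X₄)
    (w₁ : Matrix (Fin m) (Fin m) K) (w₂ : Matrix (Fin m) (Fin (n - m)) K)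
    (w₄ : Matrix (Fin (n - m)) (Fin (n - m)) K)
    (hw₁tri : ∀ i j : Fin m, (j : ℕ) < (i : ℕ) → w₁ i j = 0)
    (hw₁diag : ∀ i, w₁ i i = 1)
    (hw₄O : MemO O w₄)
    (hw₄tri : ∀ i j : Fin (n - m), (j : ℕ) < (i : ℕ) → w₄ i j = 0)
    (hw₄diag : ∀ i, w₄ i i = 1) :
    Matrix.fromBlocks X₁ X₂ X₃ X₄ * Matrix.fromBlocks w₁ w₂ 0 w₄ ∈ Vsupp O m (n - m) ↔
      MemO O w₁ ∧ MemO O w₂ := by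
  obtain ⟨c, hcO, hc⟩ := BnegBpos.det_unit hX₁
  have hX₁O : MemO O X₁ := BnegBpos.memO hX₁
  rw [Matrix.fromBlocks_multiply]
  constructor
  · rintro ⟨h11, h12, h21, h22⟩
    rw [Matrix.toBlocks_fromBlocks₁₁] at h11
    rw [Matrix.toBlocks_fromBlocks₁₂] at h12
    have hX₁w₁ : MemO O (X₁ * w₁) := by
      have := BnegBpos.memO h11
      simpa using this
    have hw₁ : MemO O w₁ := memO_of_mul_memO hX₁O hcO hc hX₁w₁
    have hX₁w₂ : MemO O (X₁ * w₂) := by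
      intro i j
      have h24 : MemO O (X₂ * w₄) := memO_mul_s8 hX₂ hw₄O
      have := O.sub_mem (h12 i j) (h24 i j)
      simpa [Matrix.add_apply] using this
    exact ⟨hw₁, memO_of_mul_memO hX₁O hcO hc hX₁w₂⟩
  · rintro ⟨hw₁, hw₂⟩
    obtain ⟨l, hl, u, ⟨huO, hutri, hudiag⟩, rfl⟩ := hX₁
    refine ⟨?_, ?_, ?_, ?_⟩
    · rw [Matrix.toBlocks_fromBlocks₁₁]
      refine ⟨l, hl, u * w₁, ⟨memO_mul_s8 huO hw₁, ?_, ?_⟩, by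
        rw [Matrix.mul_zero, add_zero, Matrix.mul_assoc]⟩
      · intro i j hji
        rw [Matrix.mul_apply]
        refine Finset.sum_eq_zero fun k _ => ?_
        rcases lt_or_ge (k : ℕ) (i : ℕ) with h | h
        · rw [hutri i k h, zero_mul]
        · rw [hw₁tri k j (lt_of_lt_of_le hji h), mul_zero]
      · intro i
        have : (u * w₁) i i = u i i := by
          rw [Matrix.mul_apply]
          rw [Finset.sum_eq_single i (fun k _ hk => ?_) (by simp)]
          · rw [hw₁diag, mul_one]
          · rcases lt_or_gt_of_ne (fun h : (k : ℕ) = (i : ℕ) => hk (Fin.ext h)) with h | h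
            · rw [hutri i k h, zero_mul]
            · rw [hw₁tri k i h, mul_zero]
        rw [this]
        exact hudiag i
    · rw [Matrix.toBlocks_fromBlocks₁₂]
      exact memO_add (memO_mul_s8 (memO_mul_s8 (hl.1) huO) hw₂) (memO_mul_s8 hX₂ hw₄O)
    · rw [Matrix.toBlocks_fromBlocks₂₁]
      have : MemO O (X₃ * w₁) := memO_mul_s8 hX₃ hw₁
      simpa using this
    · rw [Matrix.toBlocks_fromBlocks₂₂]
      exact memO_add (memO_mul_s8 hX₃ hw₂) (memO_mul_s8 hX₄ hw₄O)
end

section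
/- Let K be a field, O a subring of K, and n ≥ 1. Let J' = [[0,1ₙ],[−1ₙ,0]] and let U_O denote the set of 2n×2n matrices g with entries in O, of block form g = [[A,B],[0,D]] with A upper-triangular with all diagonal entries 1, satisfying gᵀ·J'·g = J'. For a₁,…,aₙ ∈ Kˣ set T = diag(a₁,…,aₙ,a₁⁻¹,…,aₙ⁻¹). Then T·g·T⁻¹ ∈ U_O for every g ∈ U_O if and only if aⱼ·aⱼ₊₁⁻¹ ∈ O for all 1 ≤ j ≤ n−1 and aₙ² ∈ O. -/
open Matrix

/-- The symplectic form matrix `J' = [[0,1ₙ],[−1ₙ,0]]`. -/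
def Jsymp (K : Type*) [Field K] (n : ℕ) : Matrix (Fin n ⊕ Fin n) (Fin n ⊕ Fin n) K :=
  Matrix.fromBlocks 0 1 (-1) 0

/-- `U_O`: matrices over `O` of block shape `[[A,B],[0,D]]` with `A` upper-triangular
unipotent, preserving the symplectic form `J'`. -/
def UsympO {K : Type*} [Field K] (O : Subring K) (n : ℕ) :
    Set (Matrix (Fin n ⊕ Fin n) (Fin n ⊕ Fin n) K) :=
  {g | MemO O g ∧ (∀ i j, g (Sum.inr i) (Sum.inl j) = 0) ∧
    (∀ i j : Fin n, (j : ℕ) < (i : ℕ) → g (Sum.inl i) (Sum.inl j) = 0) ∧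
    (∀ i, g (Sum.inl i) (Sum.inl i) = 1) ∧
    gᵀ * Jsymp K n * g = Jsymp K n}

private lemma jconj_aux {K : Type*} [Field K] {n : ℕ} (e : Fin n ⊕ Fin n → K)
    (he : ∀ i, e (Sum.inl i) * e (Sum.inr i) = 1) :
    diagonal e * Jsymp K n * diagonal e = Jsymp K n := by
  ext p q
  rw [mul_diagonal, diagonal_mul]
  rcases p with i|i <;> rcases q with j|j <;>
    simp only [Jsymp, fromBlocks_apply₁₁, fromBlocks_apply₁₂, fromBlocks_apply₂₁,
      fromBlocks_apply₂₂, Matrix.zero_apply, Matrix.one_apply, Matrix.neg_apply,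
      mul_zero, zero_mul]
  · split_ifs with h
    · subst h; rw [mul_one]; exact he i
    · simp
  · split_ifs with h
    · subst h
      have h2 := he i
      rw [mul_comm] at h2
      simp [h2]
    · simp

private lemma transpose_std {K : Type*} [Field K] {n : ℕ} (i j : Fin n) :
    (Matrix.single i j (1:K))ᵀ = Matrix.single j i 1 := by
  ext p q
  simp [Matrix.single, and_comm]

/-- The characterization of the semigroup `T⁺_{G_p}` for `G_p = Sp_{2n}` (Case OS0):
`T·U_O·T⁻¹ ⊆ U_O` iff `aⱼ·aⱼ₊₁⁻¹ ∈ O` for all `j` and `aₙ² ∈ O`. -/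
theorem semigroup_characterization_Sp {K : Type*} [Field K] (O : Subring K)
    (n : ℕ) (hn : 1 ≤ n) (a : Fin n → Kˣ) :
    (∀ g ∈ UsympO O n,
        Matrix.fromBlocks (Matrix.diagonal fun i => (a i : K)) 0 0
            (Matrix.diagonal fun i => ((a i : K))⁻¹) * g *
          (Matrix.fromBlocks (Matrix.diagonal fun i => (a i : K)) 0 0
            (Matrix.diagonal fun i => ((a i : K))⁻¹))⁻¹ ∈ UsympO O n) ↔
      ((∀ i j : Fin n, (i : ℕ) + 1 = (j : ℕ) → (a i : K) * ((a j : K))⁻¹ ∈ O) ∧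
        ((a ⟨n - 1, by omega⟩ : K)) ^ 2 ∈ O) := by
  simp only [Matrix.fromBlocks_diagonal]
  set d : Fin n ⊕ Fin n → K := Sum.elim (fun i => (a i : K)) fun i => ((a i : K))⁻¹ with hd
  have hd0 : ∀ p, d p ≠ 0 := by
    rintro (i|i) <;> simp [hd]
  have hTinv : (diagonal d)⁻¹ = diagonal fun p => (d p)⁻¹ := by
    apply inv_eq_right_inv
    rw [diagonal_mul_diagonal]
    have h1 : (fun i => d i * (d i)⁻¹) = fun _ => (1:K) :=
      funext fun p => mul_inv_cancel₀ (hd0 p)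
    rw [h1, diagonal_one]
  simp only [hTinv]
  have hconj : ∀ (g : Matrix (Fin n ⊕ Fin n) (Fin n ⊕ Fin n) K) p q,
      (diagonal d * g * diagonal fun p => (d p)⁻¹) p q = d p * g p q * (d q)⁻¹ := by
    intro g p q; rw [mul_diagonal, diagonal_mul]
  have hJ1 : diagonal d * Jsymp K n * diagonal d = Jsymp K n :=
    jconj_aux d (fun i => by simp [hd])
  have hJ2 : (diagonal fun p => (d p)⁻¹) * Jsymp K n * (diagonal fun p => (d p)⁻¹) = Jsymp K n :=
    jconj_aux _ (fun i => by simp [hd])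
  -- stability: only the integrality condition matters
  have stab : ∀ g ∈ UsympO O n,
      (∀ p q, d p * g p q * (d q)⁻¹ ∈ O) →
      diagonal d * g * (diagonal fun p => (d p)⁻¹) ∈ UsympO O n := by
    rintro g ⟨hmem, hll, hut, hdiag, hsymp⟩ hO
    refine ⟨fun p q => by rw [hconj]; exact hO p q, ?_, ?_, ?_, ?_⟩
    · intro i j; rw [hconj, hll, mul_zero, zero_mul]
    · intro i j hlt; rw [hconj, hut i j hlt, mul_zero, zero_mul]
    · intro i; rw [hconj, hdiag, mul_one]; exact mul_inv_cancel₀ (hd0 _)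
    · have h1 : (diagonal d * g * diagonal fun p => (d p)⁻¹)ᵀ
          = (diagonal fun p => (d p)⁻¹) * gᵀ * diagonal d := by
        rw [transpose_mul, transpose_mul, diagonal_transpose, diagonal_transpose, mul_assoc]
      rw [h1]
      have h2 : (diagonal fun p => (d p)⁻¹) * gᵀ * diagonal d * Jsymp K n *
            (diagonal d * g * diagonal fun p => (d p)⁻¹)
          = (diagonal fun p => (d p)⁻¹) *
              (gᵀ * (diagonal d * Jsymp K n * diagonal d) * g) *
              (diagonal fun p => (d p)⁻¹) := by
        simp only [mul_assoc]
      rw [h2, hJ1, hsymp, hJ2]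
  constructor
  · intro H
    constructor
    · intro i j hij
      have hij' : i ≠ j := fun h => by subst h; omega
      set A : Matrix (Fin n) (Fin n) K := 1 + Matrix.single i j 1 with hA
      set D : Matrix (Fin n) (Fin n) K := 1 - Matrix.single j i 1 with hD
      have hg : fromBlocks A 0 0 D ∈ UsympO O n := by
        refine ⟨?_, ?_, ?_, ?_, ?_⟩
        · rintro (p|p) (q|q) <;>
            simp only [hA, hD, fromBlocks_apply₁₁, fromBlocks_apply₁₂, fromBlocks_apply₂₁,
              fromBlocks_apply₂₂, Matrix.add_apply, Matrix.sub_apply, Matrix.one_apply,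
              Matrix.zero_apply, Matrix.single, of_apply] <;>
            (try split_ifs) <;>
            first
              | exact O.zero_mem
              | exact O.one_mem
              | exact add_mem O.one_mem O.one_mem
              | exact add_mem O.one_mem O.zero_mem
              | exact add_mem O.zero_mem O.one_mem
              | exact add_mem O.zero_mem O.zero_mem
              | exact sub_mem O.one_mem O.one_mem
              | exact sub_mem O.one_mem O.zero_mem
              | exact sub_mem O.zero_mem O.one_mem
              | exact sub_mem O.zero_mem O.zero_mem
        · intro p q; simp
        · intro p q hlt
          have h1 : ¬ p = q := fun h => by subst h; omega
          have h2 : ¬ (i = p ∧ j = q) := by rintro ⟨rfl, rfl⟩; omega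
          simp [hA, Matrix.one_apply, Matrix.single, h1, h2]
        · intro p
          have h2 : ¬ (i = p ∧ j = p) := by rintro ⟨rfl, rfl⟩; omega
          simp [hA, Matrix.one_apply, Matrix.single, h2]
        · have hE : Matrix.single j i (1:K) * Matrix.single j i 1 = 0 :=
            single_mul_single_of_ne (c := (1:K)) j i j hij' 1
          have hE' : Matrix.single i j (1:K) * Matrix.single i j 1 = 0 :=
            single_mul_single_of_ne (c := (1:K)) i j i (fun h => hij' h.symm) 1
          have hAT : Aᵀ = 1 + Matrix.single j i 1 := by
            rw [hA, transpose_add, transpose_one, transpose_std]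
          have hDT : Dᵀ = 1 - Matrix.single i j 1 := by
            rw [hD, transpose_sub, transpose_one, transpose_std]
          have hAD : Aᵀ * D = 1 := by
            rw [hAT, hD]
            have : (1 + Matrix.single j i (1:K)) * (1 - Matrix.single j i 1)
                = 1 - Matrix.single j i 1 * Matrix.single j i 1 := by noncomm_ring
            rw [this, hE, sub_zero]
          have hDA : Dᵀ * A = 1 := by
            rw [hDT, hA]
            have : (1 - Matrix.single i j (1:K)) * (1 + Matrix.single i j 1)
                = 1 - Matrix.single i j 1 * Matrix.single i j 1 := by noncomm_ring
            rw [this, hE', sub_zero]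
          rw [fromBlocks_transpose, Jsymp, fromBlocks_multiply, fromBlocks_multiply]
          simp [hAD, hDA, Matrix.neg_mul]
      have hval := (H _ hg).1 (Sum.inl i) (Sum.inl j)
      rw [hconj] at hval
      have hent : (fromBlocks A 0 0 D) (Sum.inl i) (Sum.inl j) = 1 := by
        simp [hA, fromBlocks_apply₁₁, Matrix.one_apply_ne hij']
      rw [hent] at hval
      simpa [hd] using hval
    · set m : Fin n := ⟨n - 1, by omega⟩ with hm
      set B : Matrix (Fin n) (Fin n) K := Matrix.single m m 1 with hB
      have hg : fromBlocks (1 : Matrix (Fin n) (Fin n) K) B 0 (1 : Matrix (Fin n) (Fin n) K) ∈ UsympO O n := by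
        refine ⟨?_, ?_, ?_, ?_, ?_⟩
        · rintro (p|p) (q|q) <;>
            simp only [hB, fromBlocks_apply₁₁, fromBlocks_apply₁₂, fromBlocks_apply₂₁,
              fromBlocks_apply₂₂, Matrix.one_apply, Matrix.zero_apply, Matrix.single,
              of_apply] <;>
            (try split_ifs) <;>
            first | exact O.zero_mem | exact O.one_mem
        · intro p q; simp
        · intro p q hlt
          have h1 : ¬ p = q := fun h => by subst h; omega
          simp [Matrix.one_apply, h1]
        · intro p; simp [Matrix.one_apply]
        · have hBT : Bᵀ = B := by rw [hB, transpose_std]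
          rw [fromBlocks_transpose, Jsymp, fromBlocks_multiply, fromBlocks_multiply]
          simp [hBT, Matrix.neg_mul]
      have hval := (H _ hg).1 (Sum.inl m) (Sum.inr m)
      rw [hconj] at hval
      have hent : (fromBlocks (1 : Matrix (Fin n) (Fin n) K) B 0 (1 : Matrix (Fin n) (Fin n) K)) (Sum.inl m) (Sum.inr m) = 1 := by
        simp [hB, fromBlocks_apply₁₂]
      rw [hent] at hval
      simpa [hd, sq] using hval
  · rintro ⟨hcons, hsq⟩ g hg
    obtain ⟨hmem, hll, hut, hdiag, hsymp⟩ := hg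
    have hrat : ∀ k : ℕ, ∀ i j : Fin n, (j:ℕ) = (i:ℕ) + k → (a i : K) * ((a j : K))⁻¹ ∈ O := by
      intro k
      induction k with
      | zero =>
        intro i j h
        have hij : i = j := Fin.ext (by omega)
        subst hij
        rw [mul_inv_cancel₀ (Units.ne_zero _)]
        exact O.one_mem
      | succ k ih =>
        intro i j h
        have hjlt : (i:ℕ) + k < n := by have := j.2; omega
        have h1 := ih i ⟨(i:ℕ) + k, hjlt⟩ rfl
        have h2 := hcons ⟨(i:ℕ) + k, hjlt⟩ j (by simp; omega)
        have hrw : (a i : K) * ((a j : K))⁻¹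
            = ((a i : K) * ((a ⟨(i:ℕ) + k, hjlt⟩ : K))⁻¹)
              * ((a ⟨(i:ℕ) + k, hjlt⟩ : K) * ((a j : K))⁻¹) := by
          field_simp
        rw [hrw]
        exact O.mul_mem h1 h2
    have hle : ∀ i j : Fin n, (i:ℕ) ≤ (j:ℕ) → (a i : K) * ((a j : K))⁻¹ ∈ O :=
      fun i j h => hrat ((j:ℕ) - (i:ℕ)) i j (by omega)
    set m : Fin n := ⟨n - 1, by omega⟩ with hm
    have hsq' : ((a m : K)) ^ 2 ∈ O := hsq
    have hprod : ∀ i j : Fin n, (a i : K) * (a j : K) ∈ O := by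
      intro i j
      have h1 := hle i m (Nat.le_pred_of_lt i.2)
      have h2 := hle j m (Nat.le_pred_of_lt j.2)
      have hrw : (a i : K) * (a j : K)
          = ((a i : K) * ((a m : K))⁻¹) * ((a j : K) * ((a m : K))⁻¹) * ((a m : K)) ^ 2 := by
        field_simp
      rw [hrw]
      exact O.mul_mem (O.mul_mem h1 h2) hsq'
    -- D block is lower triangular
    have hC : g.toBlocks₂₁ = 0 := by
      ext p q; exact hll p q
    have hgb : g = fromBlocks g.toBlocks₁₁ g.toBlocks₁₂ 0 g.toBlocks₂₂ := by
      conv_lhs => rw [← fromBlocks_toBlocks g]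
      rw [hC]
    have hADone : (g.toBlocks₁₁)ᵀ * g.toBlocks₂₂ = 1 := by
      have h := hsymp
      rw [hgb, fromBlocks_transpose, Jsymp, fromBlocks_multiply, fromBlocks_multiply] at h
      have h2 := congrArg Matrix.toBlocks₁₂ h
      simpa using h2
    have hDlt : ∀ N : ℕ, ∀ p q : Fin n, (p:ℕ) < N → (p:ℕ) < (q:ℕ) → g.toBlocks₂₂ p q = 0 := by
      intro N
      induction N with
      | zero => intro p q h _; omega
      | succ N ih =>
        intro p q hpN hpq
        have hentry := congrFun (congrFun hADone p) q
        rw [Matrix.mul_apply] at hentry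
        have hne : p ≠ q := fun h => by subst h; omega
        have hone : (1 : Matrix (Fin n) (Fin n) K) p q = 0 := Matrix.one_apply_ne hne
        rw [hone] at hentry
        have hsum : ∀ k ∈ Finset.univ, k ≠ p → (g.toBlocks₁₁)ᵀ p k * g.toBlocks₂₂ k q = 0 := by
          intro k _ hk
          rcases Nat.lt_or_ge (k:ℕ) (p:ℕ) with hlt | hge
          · rw [ih k q (by omega) (by omega), mul_zero]
          · have hgt : (p:ℕ) < (k:ℕ) := by
              rcases Nat.eq_or_lt_of_le hge with h|h
              · exact absurd (Fin.ext h) (Ne.symm hk)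
              · exact h
            have hz : (g.toBlocks₁₁)ᵀ p k = 0 := by
              show g.toBlocks₁₁ k p = 0
              exact hut k p hgt
            rw [hz, zero_mul]
        rw [Finset.sum_eq_single_of_mem p (Finset.mem_univ p) hsum] at hentry
        have hApp : (g.toBlocks₁₁)ᵀ p p = 1 := by
          show g.toBlocks₁₁ p p = 1
          exact hdiag p
        rw [hApp, one_mul] at hentry
        exact hentry
    refine stab g ⟨hmem, hll, hut, hdiag, hsymp⟩ ?_
    rintro (i|i) (j|j)
    · simp only [hd, Sum.elim_inl]
      rcases Nat.lt_or_ge (j:ℕ) (i:ℕ) with h|h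
      · rw [hut i j h, mul_zero, zero_mul]; exact O.zero_mem
      · have hrw : (a i : K) * g (Sum.inl i) (Sum.inl j) * ((a j : K))⁻¹
            = ((a i : K) * ((a j : K))⁻¹) * g (Sum.inl i) (Sum.inl j) := by ring
        rw [hrw]
        exact O.mul_mem (hle i j h) (hmem _ _)
    · simp only [hd, Sum.elim_inl, Sum.elim_inr, inv_inv]
      have hrw : (a i : K) * g (Sum.inl i) (Sum.inr j) * (a j : K)
          = ((a i : K) * (a j : K)) * g (Sum.inl i) (Sum.inr j) := by ring
      rw [hrw]
      exact O.mul_mem (hprod i j) (hmem _ _)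
    · rw [hll, mul_zero, zero_mul]; exact O.zero_mem
    · simp only [hd, Sum.elim_inr, inv_inv]
      rcases Nat.lt_or_ge (i:ℕ) (j:ℕ) with h|h
      · have hz : g (Sum.inr i) (Sum.inr j) = 0 := hDlt n i j i.2 h
        rw [hz, mul_zero, zero_mul]; exact O.zero_mem
      · have hrw : ((a i : K))⁻¹ * g (Sum.inr i) (Sum.inr j) * (a j : K)
            = ((a j : K) * ((a i : K))⁻¹) * g (Sum.inr i) (Sum.inr j) := by ring
        rw [hrw]
        exact O.mul_mem (hle j i h) (hmem _ _)
end

section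
/- Let K be a field, O a subring of K, 1 ≤ m ≤ n, and R a commutative ring. For each 1 ≤ j ≤ m let χⱼ : Oˣ → Rˣ be a group homomorphism. Define φ_χ : M_{2m,n}(K) → R by φ_χ(X) = ∏_{j=1}^m χⱼ(D_j(X₁)) if X = [[X₁,X₂],[X₃,X₄]] lies in V_supp (where D_j(X₁), the determinant of the upper-left j×j submatrix of X₁, is a unit of O for X ∈ V_supp), and φ_χ(X) = 0 otherwise. Then for all t₁,…,tₘ ∈ Oˣ, setting T = diag(t₁,…,tₘ,t₁⁻¹,…,tₘ⁻¹) ∈ GL₂ₘ(K), one has φ_χ(T·X) = (∏_{j=1}^m χⱼ(t₁·t₂⋯tⱼ)) · φ_χ(X) for every X ∈ M_{2m,n}(K). -/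
open Matrix

open Classical in
/-- The unit of `O` whose image in `K` is `x`, when it exists (it is then unique, since
`Oˣ → K` is injective); junk value `1` otherwise. -/
noncomputable def unitOf {K : Type*} [Field K] (O : Subring K) (x : K) : Oˣ :=
  if h : ∃ u : Oˣ, ((u : O) : K) = x then h.choose else 1

/-- The `j`-th leading principal minor (of size `j+1`) of an `m × m` matrix. -/
def pminor {K : Type*} [Field K] {m : ℕ} (X : Matrix (Fin m) (Fin m) K) (j : Fin m) : K :=
  (X.submatrix (Fin.castLE j.isLt) (Fin.castLE j.isLt)).det

open Classical in
/-- The Schwartz function `φ_χ` of (eq:Schwchi): `∏ⱼ χⱼ(Dⱼ(X₁))` on `V_supp`, `0` elsewhere. -/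
noncomputable def phiChi {K : Type*} [Field K] {R : Type*} [CommRing R]
    (O : Subring K) (m r : ℕ) (χ : Fin m → (Oˣ →* Rˣ))
    (X : Matrix (Fin m ⊕ Fin m) (Fin m ⊕ Fin r) K) : R :=
  if X ∈ Vsupp O m r then
    ∏ j : Fin m, ((χ j (unitOf O (pminor (X.toBlocks₁₁) j))) : R)
  else 0


section helpers
variable {K : Type*} [Field K] (O : Subring K)

/-- The monoid hom `Oˣ → K`. -/
noncomputable def coeKhom : Oˣ →* K := O.subtype.toMonoidHom.comp (Units.coeHom O)

@[simp] lemma coeKhom_apply (u : Oˣ) : coeKhom O u = ((u : O) : K) := rfl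

lemma unitOf_coe (u : Oˣ) : unitOf O ((u : O) : K) = u := by
  have hex : ∃ v : Oˣ, ((v : O) : K) = ((u : O) : K) := ⟨u, rfl⟩
  rw [unitOf, dif_pos hex]
  exact Units.ext (Subtype.ext hex.choose_spec)

lemma exists_unit_of (x c : K) (hx : x ∈ O) (hc : c ∈ O) (h : x * c = 1) :
    ∃ u : Oˣ, ((u : O) : K) = x :=
  ⟨⟨⟨x, hx⟩, ⟨c, hc⟩, Subtype.ext h, Subtype.ext (by rwa [mul_comm] at h)⟩, rfl⟩

lemma unitOf_spec {x : K} (h : ∃ u : Oˣ, ((u : O) : K) = x) :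
    ((unitOf O x : O) : K) = x := by
  rw [unitOf, dif_pos h]; exact h.choose_spec

end helpers

section fin
variable {M : Type*} [CommMonoid M] {m : ℕ}

lemma prod_castLE (j : Fin m) (g : Fin m → M) :
    ∏ i : Fin ((j : ℕ) + 1), g (Fin.castLE j.isLt i) = ∏ k ∈ Finset.Iic j, g k := by
  refine Finset.prod_bij (fun a _ => Fin.castLE j.isLt a) ?_ ?_ ?_ ?_
  · intro a _; simp [Finset.mem_Iic, Fin.le_def, Nat.lt_succ_iff.mp a.isLt, Fin.lt_def]
  · intro a _ b _ h; exact Fin.castLE_injective _ h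
  · intro b hb
    exact ⟨⟨(b : ℕ), Nat.lt_succ_of_le (Fin.le_def.mp (Finset.mem_Iic.mp hb))⟩, Finset.mem_univ _, rfl⟩
  · intro a _; rfl

end fin

section mat
open Matrix
variable {K : Type*} [Field K] (O : Subring K) {m r : ℕ}

lemma submatrix_diag_mul (d : Fin m → K) (M : Matrix (Fin m) (Fin m) K) (j : Fin m) :
    (Matrix.diagonal d * M).submatrix (Fin.castLE j.isLt) (Fin.castLE j.isLt) =
      Matrix.diagonal (d ∘ Fin.castLE j.isLt) *
        M.submatrix (Fin.castLE j.isLt) (Fin.castLE j.isLt) := by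
  ext i k
  simp [Matrix.submatrix_apply, Matrix.diagonal_mul]

lemma pminor_diag_mul (d : Fin m → K) (M : Matrix (Fin m) (Fin m) K) (j : Fin m) :
    pminor (Matrix.diagonal d * M) j = (∏ k ∈ Finset.Iic j, d k) * pminor M j := by
  rw [pminor, submatrix_diag_mul, Matrix.det_mul, Matrix.det_diagonal, pminor]
  congr 1
  exact prod_castLE j d

lemma submatrix_mul_of_lower (l u : Matrix (Fin m) (Fin m) K)
    (hl : ∀ i k : Fin m, (i : ℕ) < (k : ℕ) → l i k = 0) (j : Fin m) :
    (l * u).submatrix (Fin.castLE j.isLt) (Fin.castLE j.isLt) =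
      l.submatrix (Fin.castLE j.isLt) (Fin.castLE j.isLt) *
        u.submatrix (Fin.castLE j.isLt) (Fin.castLE j.isLt) := by
  ext i k
  simp only [Matrix.submatrix_apply, Matrix.mul_apply]
  have hmap : ∑ b : Fin ((j : ℕ) + 1),
        l (Fin.castLE j.isLt i) (Fin.castLE j.isLt b) * u (Fin.castLE j.isLt b) (Fin.castLE j.isLt k)
      = ∑ a ∈ Finset.univ.map (Fin.castLEEmb j.isLt),
        l (Fin.castLE j.isLt i) a * u a (Fin.castLE j.isLt k) := by
    rw [Finset.sum_map]; rfl
  rw [hmap]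
  refine (Finset.sum_subset (Finset.subset_univ _) ?_).symm
  intro a _ ha
  have haj : (j : ℕ) + 1 ≤ (a : ℕ) := by
    by_contra hcon
    exact ha (Finset.mem_map.mpr ⟨⟨(a : ℕ), Nat.lt_of_not_le hcon⟩, Finset.mem_univ _, rfl⟩)
  have : ((Fin.castLE j.isLt i : Fin m) : ℕ) < (a : ℕ) :=
    lt_of_lt_of_le i.isLt haj
  rw [hl _ _ this, zero_mul]

lemma pminor_unit_of_BnegBpos {M : Matrix (Fin m) (Fin m) K}
    (hM : M ∈ BnegBpos O m) (j : Fin m) :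
    ∃ v : Oˣ, ((v : O) : K) = pminor M j := by
  obtain ⟨l, hl, u, hu, rfl⟩ := hM
  have hlu : ∀ i : Fin m, ∃ v : Oˣ, ((v : O) : K) = l i i * u i i := by
    intro i
    obtain ⟨c, hc, hcl⟩ := hl.2.2 i
    obtain ⟨c', hc', hcu⟩ := hu.2.2 i
    refine exists_unit_of O _ (c * c') (O.mul_mem (hl.1 i i) (hu.1 i i))
      (O.mul_mem hc hc') ?_
    calc l i i * u i i * (c * c') = (l i i * c) * (u i i * c') := by ring
      _ = 1 := by rw [hcl, hcu, one_mul]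
  rw [pminor, submatrix_mul_of_lower l u hl.2.1 j, Matrix.det_mul]
  rw [Matrix.det_of_lowerTriangular _ ?hlow, Matrix.det_of_upperTriangular ?hup]
  case hlow =>
    intro a b hab
    have hab' : a < b := OrderDual.toDual_lt_toDual.mp hab
    exact hl.2.1 _ _ hab'
  case hup =>
    intro a b hab
    exact hu.2.1 _ _ hab
  rw [← Finset.prod_mul_distrib]
  refine ⟨∏ i : Fin ((j : ℕ) + 1), (hlu (Fin.castLE j.isLt i)).choose, ?_⟩
  rw [← coeKhom_apply, map_prod]
  exact Finset.prod_congr rfl fun i _ => (hlu (Fin.castLE j.isLt i)).choose_spec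

end mat

section vsupp
open Matrix
variable {K : Type*} [Field K] (O : Subring K) {m r : ℕ}

lemma fromBlocks_diag_mul (A B : Matrix (Fin m) (Fin m) K)
    (X : Matrix (Fin m ⊕ Fin m) (Fin m ⊕ Fin r) K) :
    Matrix.fromBlocks A 0 0 B * X =
      Matrix.fromBlocks (A * X.toBlocks₁₁) (A * X.toBlocks₁₂)
        (B * X.toBlocks₂₁) (B * X.toBlocks₂₂) := by
  conv_lhs => rw [← Matrix.fromBlocks_toBlocks X]
  rw [Matrix.fromBlocks_multiply]
  simp

lemma coe_mul_inv_coe (u : Oˣ) : ((u : O) : K) * (((u⁻¹ : Oˣ) : O) : K) = 1 := by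
  have h : ((u : O) * ((u⁻¹ : Oˣ) : O) : O) = 1 := by
    rw [← Units.val_mul, mul_inv_cancel, Units.val_one]
  calc ((u : O) : K) * (((u⁻¹ : Oˣ) : O) : K) = (((u : O) * ((u⁻¹ : Oˣ) : O) : O) : K) := rfl
    _ = 1 := by rw [h]; rfl

lemma diag_mul_mem_Bneg (d : Fin m → Oˣ) {l : Matrix (Fin m) (Fin m) K}
    (hl : l ∈ Bneg O m) :
    Matrix.diagonal (fun i => ((d i : O) : K)) * l ∈ Bneg O m := by
  refine ⟨?_, ?_, ?_⟩
  · intro i j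
    rw [Matrix.diagonal_mul]
    exact O.mul_mem (SetLike.coe_mem _) (hl.1 i j)
  · intro i j hij
    rw [Matrix.diagonal_mul, hl.2.1 i j hij, mul_zero]
  · intro i
    obtain ⟨c, hc, hlc⟩ := hl.2.2 i
    refine ⟨c * (((d i)⁻¹ : Oˣ) : O), O.mul_mem hc (SetLike.coe_mem _), ?_⟩
    rw [Matrix.diagonal_mul]
    calc ((d i : O) : K) * l i i * (c * (((d i)⁻¹ : Oˣ) : O))
        = (l i i * c) * (((d i : O) : K) * (((d i)⁻¹ : Oˣ) : O)) := by ring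
      _ = 1 := by rw [hlc, coe_mul_inv_coe, one_mul]

lemma memO_diag_mul (d : Fin m → O) {s : ℕ} {M : Matrix (Fin m) (Fin s) K}
    (hM : MemO O M) : MemO O (Matrix.diagonal (fun i => ((d i : O) : K)) * M) := by
  intro i j
  rw [Matrix.diagonal_mul]
  exact O.mul_mem (SetLike.coe_mem _) (hM i j)

lemma Tmul_mem_Vsupp (t : Fin m → Oˣ)
    {X : Matrix (Fin m ⊕ Fin m) (Fin m ⊕ Fin r) K} (hX : X ∈ Vsupp O m r) :
    Matrix.fromBlocks (Matrix.diagonal fun i => ((t i : O) : K)) 0 0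
      (Matrix.diagonal fun i => ((((t i)⁻¹ : Oˣ) : O) : K)) * X ∈ Vsupp O m r := by
  rw [fromBlocks_diag_mul]
  obtain ⟨⟨l, hl, u, hu, h1⟩, h2, h3, h4⟩ := hX
  refine ⟨?_, ?_, ?_, ?_⟩
  · simp only [Matrix.toBlocks_fromBlocks₁₁]
    exact ⟨_, diag_mul_mem_Bneg O t hl, u, hu, by rw [h1, mul_assoc]⟩
  · simp only [Matrix.toBlocks_fromBlocks₁₂]
    exact memO_diag_mul O (fun i => (t i : O)) h2
  · simp only [Matrix.toBlocks_fromBlocks₂₁]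
    exact memO_diag_mul O (fun i => ((t i)⁻¹ : Oˣ)) h3
  · simp only [Matrix.toBlocks_fromBlocks₂₂]
    exact memO_diag_mul O (fun i => ((t i)⁻¹ : Oˣ)) h4

lemma Tmul_Tinv_mul (t : Fin m → Oˣ)
    (X : Matrix (Fin m ⊕ Fin m) (Fin m ⊕ Fin r) K) :
    Matrix.fromBlocks (Matrix.diagonal fun i => ((((t i)⁻¹ : Oˣ) : O) : K)) 0 0
        (Matrix.diagonal fun i => (((((t i)⁻¹ : Oˣ)⁻¹ : Oˣ) : O) : K)) *
      (Matrix.fromBlocks (Matrix.diagonal fun i => ((t i : O) : K)) 0 0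
        (Matrix.diagonal fun i => ((((t i)⁻¹ : Oˣ) : O) : K)) * X) = X := by
  rw [← Matrix.mul_assoc, Matrix.fromBlocks_multiply]
  have h1 : (Matrix.diagonal fun i => ((((t i)⁻¹ : Oˣ) : O) : K)) *
      (Matrix.diagonal fun i => ((t i : O) : K)) = 1 := by
    rw [Matrix.diagonal_mul_diagonal]
    have : ∀ i, (((((t i)⁻¹ : Oˣ) : O) : K)) * ((t i : O) : K) = 1 := by
      intro i
      have := coe_mul_inv_coe O (t i)⁻¹
      rwa [inv_inv] at this
    simp only [this]
    exact Matrix.diagonal_one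
  have h2 : (Matrix.diagonal fun i => (((((t i)⁻¹ : Oˣ)⁻¹ : Oˣ) : O) : K)) *
      (Matrix.diagonal fun i => ((((t i)⁻¹ : Oˣ) : O) : K)) = 1 := by
    rw [Matrix.diagonal_mul_diagonal]
    have : ∀ i, ((((((t i)⁻¹ : Oˣ)⁻¹ : Oˣ) : O) : K)) * ((((t i)⁻¹ : Oˣ) : O) : K) = 1 := by
      intro i
      have := coe_mul_inv_coe O ((t i)⁻¹)⁻¹
      rwa [inv_inv] at this
    simp only [this]
    exact Matrix.diagonal_one
  simp only [Matrix.mul_zero, Matrix.zero_mul, add_zero, zero_add, h1, h2]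
  rw [Matrix.fromBlocks_one, Matrix.one_mul]

end vsupp

/-- Torus equivariance `φ_χ(t·X) = χ(t)·φ_χ(X)` of the Schwartz function (eq:Schwchi),
used in the proof of Proposition prop:mu-beta. -/
theorem phiChi_torus_equivariance {K : Type*} [Field K] {R : Type*} [CommRing R]
    (O : Subring K) (m n : ℕ) (hm : 1 ≤ m) (hmn : m ≤ n)
    (χ : Fin m → (Oˣ →* Rˣ)) (t : Fin m → Oˣ)
    (X : Matrix (Fin m ⊕ Fin m) (Fin m ⊕ Fin (n - m)) K) :
    phiChi O m (n - m) χ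
        (Matrix.fromBlocks (Matrix.diagonal fun i => ((t i : O) : K)) 0 0
          (Matrix.diagonal fun i => ((((t i)⁻¹ : Oˣ) : O) : K)) * X) =
      (∏ j : Fin m, ((χ j (∏ k ∈ Finset.Iic j, t k)) : R)) *
        phiChi O m (n - m) χ X := by
  by_cases hX : X ∈ Vsupp O m (n - m)
  · have hTX := Tmul_mem_Vsupp O t hX
    rw [phiChi, phiChi, if_pos hTX, if_pos hX, ← Finset.prod_mul_distrib]
    refine Finset.prod_congr rfl fun j _ => ?_
    have hblk : (Matrix.fromBlocks (Matrix.diagonal fun i => ((t i : O) : K)) 0 0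
          (Matrix.diagonal fun i => ((((t i)⁻¹ : Oˣ) : O) : K)) * X).toBlocks₁₁ =
        (Matrix.diagonal fun i => ((t i : O) : K)) * X.toBlocks₁₁ := by
      rw [fromBlocks_diag_mul]
      simp
    obtain ⟨v, hv⟩ := pminor_unit_of_BnegBpos O hX.1 j
    have hcoe : ((((∏ k ∈ Finset.Iic j, t k) * v : Oˣ) : O) : K) =
        (∏ k ∈ Finset.Iic j, ((t k : O) : K)) * ((v : O) : K) := by
      rw [← coeKhom_apply, _root_.map_mul, map_prod]
      simp only [coeKhom_apply]
    have hmin : pminor ((Matrix.diagonal fun i => ((t i : O) : K)) * X.toBlocks₁₁) j =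
        ((((∏ k ∈ Finset.Iic j, t k) * v : Oˣ) : O) : K) := by
      rw [pminor_diag_mul, hcoe, hv]
    rw [hblk, hmin, unitOf_coe, ← hv, unitOf_coe, _root_.map_mul, Units.val_mul]
  · have hTX : Matrix.fromBlocks (Matrix.diagonal fun i => ((t i : O) : K)) 0 0
        (Matrix.diagonal fun i => ((((t i)⁻¹ : Oˣ) : O) : K)) * X ∉ Vsupp O m (n - m) := by
      intro h
      apply hX
      have h2 := Tmul_mem_Vsupp O (fun i => (t i)⁻¹) h
      rwa [Tmul_Tinv_mul] at h2
    rw [phiChi, phiChi, if_neg hTX, if_neg hX, mul_zero]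
end
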